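/- arXiv:1112.5632 — 6 statements merged into one kernel-verified Lean document; each statement's English description precedes it below -/
import Mathlib

section
/- For every r-regular simple graph G on 2n vertices, the number of perfect matchings of G is at most (r!)^{n/r}. -/
/-- A set `s` of edges is a `k`-matching of `G`: `k` pairwise vertex-disjoint edges. -/
def IsNMatching {V : Type*} (G : SimpleGraph V) (k : ℕ) (s : Set (Sym2 V)) : Prop :=
  s ⊆ G.edgeSet ∧ s.ncard = k ∧ s.Pairwise fun e f => ∀ v, ¬(v ∈ e ∧ v ∈ f)

/-- The number of `k`-matchings of `G`. -/
noncomputable def matchingCount {V : Type*} (G : SimpleGraph V) (k : ℕ) : ℕ :=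
  Set.ncard {s : Set (Sym2 V) | IsNMatching G k s}

/-!
Pairs `(M₁, M₂)` of perfect matchings inject into permutations `σ` with `v ~ σ v` for all `v`:
`M₁ ∪ M₂` splits into doubled edges and even alternating cycles, and `σ` runs through each
cycle in the direction that leaves its least vertex along `M₁`; from `σ` one recovers the cycles,
their least vertices, and hence `M₁` and `M₂`. So `pm(G)² ≤ perm(A_G)`, and the Bregman–Minc
inequality bounds `perm(A_G)` by `∏_v (r!)^(1/r) = (r!)^(2n/r)`.

Bregman–Minc is proved by Schrijver's induction. Write `p = perm A` and `t_{wv}` for the number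
of transversals through the entry `(w, v)`. For each row `w` of degree `d_w`, convexity of
`x log x` gives `p^p ≤ d_w^p ∏_v t_{wv}^{t_{wv}} = d_w^p ∏_σ t_{w,σ w}`; multiply over the rows,
bound `t_{w,σ w}` by the permanent of the minor at `(w, σ w)`, apply the induction hypothesis
to it and regroup the product by rows.
-/

open Finset Equiv Function Relation
open scoped Nat

theorem pow_sum_le_card_pow_mul_prod_pow_self {ι : Type*} (s : Finset ι) (t : ι → ℕ) :
    (∑ i ∈ s, t i) ^ (∑ i ∈ s, t i) ≤ #s ^ (∑ i ∈ s, t i) * ∏ i ∈ s, t i ^ t i := by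
  set p := ∑ i ∈ s, t i with hp
  rcases Nat.eq_zero_or_pos p with hp0 | hp0
  · simp [hp0, Nat.one_le_iff_ne_zero, Finset.prod_eq_zero_iff]
  have hn : 0 < #s := (nonempty_of_sum_ne_zero hp0.ne').card_pos
  have hprod : 0 < ∏ i ∈ s, t i ^ t i := prod_pos fun i _ => Nat.pow_self_pos
  have jensen := Real.convexOn_mul_log.map_sum_le (t := s) (w := fun _ => (#s : ℝ)⁻¹)
    (p := fun i => (t i : ℝ)) (fun _ _ => by positivity) (by simp [hn.ne'])
    (fun i _ => Set.mem_Ici.2 (Nat.cast_nonneg _))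
  simp only [smul_eq_mul, ← mul_sum, ← Nat.cast_sum, ← hp] at jensen
  rw [mul_comm _ (Real.log _), Real.log_mul (by positivity) (by positivity), Real.log_inv] at jensen
  rw [← Nat.cast_le (α := ℝ), ← Real.log_le_log_iff (by positivity) (by positivity)]
  push_cast
  rw [Real.log_mul (by positivity) (by exact_mod_cast hprod.ne'),
    Real.log_prod fun i _ => by exact_mod_cast Nat.pow_self_pos.ne']
  simp only [Real.log_pow]
  have := mul_le_mul_of_nonneg_left jensen (Nat.cast_nonneg (α := ℝ) #s)
  field_simp at this
  linarith

noncomputable def bregmanFactor (d : ℕ) : ℝ := (d ! : ℝ) ^ (d : ℝ)⁻¹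

lemma bregmanFactor_pos (d : ℕ) : 0 < bregmanFactor d := by
  unfold bregmanFactor; positivity

lemma bregmanFactor_pow_self (d : ℕ) : bregmanFactor d ^ d = d ! := by
  rcases eq_or_ne d 0 with rfl | hd
  · simp
  rw [bregmanFactor, ← Real.rpow_natCast, ← Real.rpow_mul (by positivity),
    inv_mul_cancel₀ (by exact_mod_cast hd), Real.rpow_one]

lemma natCast_mul_factorial_mul_bregmanFactor_pow {d N : ℕ} (hd : 1 ≤ d) (hdN : d ≤ N) :
    (d : ℝ) * ((d - 1)! * bregmanFactor d ^ (N - d)) = bregmanFactor d ^ N := by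
  rw [← mul_assoc, ← Nat.cast_mul, Nat.mul_factorial_pred (by omega), ← bregmanFactor_pow_self,
    ← pow_add, Nat.add_sub_cancel' hdN]

section Bregman

open scoped Classical

variable {V W : Type*} [Fintype V]

-- `#(transversals R)` is the permanent of the zero-one `W × V` matrix of `R`.
noncomputable def transversals [Fintype W] (R : W → V → Prop) : Finset (W ≃ V) :=
  {e | ∀ w, R w (e w)}

noncomputable def relDegree (R : W → V → Prop) (w : W) : ℕ := #{v | R w v}

def minor (R : W → V → Prop) (w : W) (v : V) : {a // a ≠ w} → {b // b ≠ v} → Prop :=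
  fun a b => R a b

lemma relDegree_minor (R : W → V → Prop) {w : W} (v : V) (a : {a // a ≠ w}) :
    relDegree (minor R w v) a = relDegree R a - if R a v then 1 else 0 := by
  have : #{b : {b // b ≠ v} | minor R w v a b} = #(({b | R a b} : Finset V).erase v) := by
    rw [← card_map (Function.Embedding.subtype _)]
    congr 1
    ext b
    simp only [mem_map, mem_filter, mem_univ, true_and, Function.Embedding.coe_subtype, mem_erase]
    simp [minor, and_comm]
  rw [relDegree, relDegree, this]
  split_ifs with h
  · exact card_erase_of_mem (by simpa using h)
  · rw [erase_eq_of_notMem (by simpa using h), Nat.sub_zero]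

variable [Fintype W]

lemma card_fiber_le_card_transversals_minor (R : W → V → Prop) (w : W) (v : V) :
    #{e ∈ transversals R | e w = v} ≤ #(transversals (minor R w v)) := by
  rw [← Fintype.card_coe, ← Fintype.card_coe]
  have hfiber (e : {e // e ∈ {e ∈ transversals R | e w = v}}) :
      (∀ a, R a (e.1 a)) ∧ e.1 w = v := by
    simpa [transversals] using e.2
  have restrict (e : {e // e ∈ {e ∈ transversals R | e w = v}}) (a : W) : a ≠ w ↔ e.1 a ≠ v := by
    simp [← (hfiber e).2, e.1.injective.ne_iff]
  refine Fintype.card_le_of_injective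
    (fun e => ⟨e.1.subtypeEquiv (restrict e), by simp [transversals, minor, (hfiber e).1]⟩) ?_
  intro e₁ e₂ h
  ext a
  rcases eq_or_ne a w with rfl | ha
  · rw [(hfiber e₁).2, (hfiber e₂).2]
  · simpa using congr($h.1 ⟨a, ha⟩)

lemma card_transversals_pow_le (R : W → V → Prop) (w : W) :
    #(transversals R) ^ #(transversals R) ≤ relDegree R w ^ #(transversals R) *
      ∏ e ∈ transversals R, #{e' ∈ transversals R | e' w = e w} := by
  set T := transversals R
  have hmaps : ∀ e ∈ T, e w ∈ ({v | R w v} : Finset V) := fun e he => by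
    simp_all [T, transversals]
  have hsum : #T = ∑ v ∈ {v | R w v}, #{e ∈ T | e w = v} := card_eq_sum_card_fiberwise hmaps
  have hprod : ∏ e ∈ T, #{e' ∈ T | e' w = e w} =
      ∏ v ∈ {v | R w v}, #{e ∈ T | e w = v} ^ #{e ∈ T | e w = v} := by
    rw [Finset.prod_comp (fun v => #{e ∈ T | e w = v})]
    refine prod_subset (image_subset_iff.2 hmaps) fun v _ hv => ?_
    rw [card_eq_zero.2 (filter_eq_empty_iff.2 fun e he hev => hv (mem_image.2 ⟨e, he, hev⟩)),
      pow_zero]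
  rw [hprod, relDegree, hsum]
  exact pow_sum_le_card_pow_mul_prod_pow_self _ _

lemma card_fiber_le_prod_bregmanFactor (R : W → V → Prop) (w : W) (v : V)
    (ih : (#(transversals (minor R w v)) : ℝ) ≤
      ∏ a, bregmanFactor (relDegree (minor R w v) a)) :
    (#{e ∈ transversals R | e w = v} : ℝ) ≤
      ∏ a ∈ univ.erase w, bregmanFactor (relDegree R a - if R a v then 1 else 0) := by
  calc (#{e ∈ transversals R | e w = v} : ℝ) ≤ #(transversals (minor R w v)) := by
        exact_mod_cast card_fiber_le_card_transversals_minor R w v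
    _ ≤ _ := ih
    _ = _ := by
      rw [prod_subtype (univ.erase w) (p := (· ≠ w)) (F := inferInstance) (by simp)]
      simp only [relDegree_minor]

lemma prod_erase_bregmanFactor (R : W → V → Prop) {e : W ≃ V} (he : e ∈ transversals R) (a : W) :
    ∏ w ∈ univ.erase a, bregmanFactor (relDegree R a - if R a (e w) then 1 else 0) =
      (relDegree R a - 1)! * bregmanFactor (relDegree R a) ^ (Fintype.card V - relDegree R a) := by
  have hea : e a ∈ ({v | R a v} : Finset V) := by simp_all [transversals]
  set d := relDegree R a
  have hadj : #(univ.erase (e a) |>.filter (R a)) = d - 1 := by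
    rw [filter_erase, card_erase_of_mem hea]; rfl
  have hnonadj : #(univ.erase (e a) |>.filter (¬R a ·)) = Fintype.card V - d := by
    rw [filter_erase, erase_eq_of_notMem (by simpa using hea), filter_not,
      card_sdiff_of_subset (filter_subset _ _), Finset.card_univ]
    rfl
  rw [prod_equiv e (t := univ.erase (e a))
      (g := fun v => if R a v then bregmanFactor (d - 1) else bregmanFactor d) (by simp)
      (fun w _ => by split_ifs <;> rfl),
    prod_ite, prod_const, prod_const, hadj, hnonadj, bregmanFactor_pow_self]

lemma prod_card_fiber_le (R : W → V → Prop)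
    (ih : ∀ w v, (#(transversals (minor R w v)) : ℝ) ≤
      ∏ a, bregmanFactor (relDegree (minor R w v) a))
    {e : W ≃ V} (he : e ∈ transversals R) :
    ∏ w, (#{e' ∈ transversals R | e' w = e w} : ℝ) ≤
      ∏ a, ((relDegree R a - 1)! * bregmanFactor (relDegree R a) ^
        (Fintype.card V - relDegree R a)) :=
  calc ∏ w, (#{e' ∈ transversals R | e' w = e w} : ℝ)
      ≤ ∏ w, ∏ a ∈ univ.erase w, bregmanFactor (relDegree R a - if R a (e w) then 1 else 0) :=
        prod_le_prod (fun _ _ => by positivity)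
          fun w _ => card_fiber_le_prod_bregmanFactor R w (e w) (ih w (e w))
    _ = ∏ a, ∏ w ∈ univ.erase a, bregmanFactor (relDegree R a - if R a (e w) then 1 else 0) :=
        prod_comm' (by simp [ne_comm])
    _ = _ := prod_congr rfl fun a _ => prod_erase_bregmanFactor R he a

lemma pow_card_transversals_le_of_minors (R : W → V → Prop)
    (ih : ∀ w v, (#(transversals (minor R w v)) : ℝ) ≤
      ∏ a, bregmanFactor (relDegree (minor R w v) a))
    {e₀ : W ≃ V} (he₀ : e₀ ∈ transversals R) :
    (#(transversals R) : ℝ) ^ (Fintype.card V * #(transversals R)) ≤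
      (∏ w, bregmanFactor (relDegree R w)) ^ (Fintype.card V * #(transversals R)) := by
  set T := transversals R
  set p := #T
  set N := Fintype.card V
  have hdeg (a : W) : 1 ≤ relDegree R a ∧ relDegree R a ≤ N :=
    ⟨card_pos.2 ⟨e₀ a, by simp_all [T, transversals]⟩, card_filter_le _ _⟩
  calc (p : ℝ) ^ (N * p) = ∏ _w : W, (p : ℝ) ^ p := by
        rw [prod_const, Finset.card_univ, Fintype.card_congr e₀, ← pow_mul, mul_comm]
    _ ≤ ∏ w, ((relDegree R w : ℝ) ^ p * ∏ e ∈ T, (#{e' ∈ T | e' w = e w} : ℝ)) :=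
        prod_le_prod (fun _ _ => by positivity)
          fun w _ => by exact_mod_cast card_transversals_pow_le R w
    _ = (∏ w, (relDegree R w : ℝ) ^ p) * ∏ e ∈ T, ∏ w, (#{e' ∈ T | e' w = e w} : ℝ) := by
        rw [prod_mul_distrib, prod_comm]
    _ ≤ (∏ w, (relDegree R w : ℝ) ^ p) * ∏ _e ∈ T, ∏ a, ((relDegree R a - 1)! *
          bregmanFactor (relDegree R a) ^ (N - relDegree R a)) :=
        mul_le_mul_of_nonneg_left (prod_le_prod
          (fun _ _ => prod_nonneg fun _ _ => Nat.cast_nonneg _)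
          fun _ he => prod_card_fiber_le R ih he) (prod_nonneg fun _ _ => by positivity)
    _ = ∏ w, (bregmanFactor (relDegree R w) ^ N) ^ p := by
        rw [prod_const, ← prod_pow, ← prod_mul_distrib]
        refine prod_congr rfl fun w _ => ?_
        rw [← mul_pow, natCast_mul_factorial_mul_bregmanFactor_pow (hdeg w).1 (hdeg w).2]
    _ = (∏ w, bregmanFactor (relDegree R w)) ^ (N * p) := by
        rw [pow_mul, prod_pow, prod_pow]

lemma card_transversals_le_of_minors (R : W → V → Prop)
    (ih : ∀ w v, (#(transversals (minor R w v)) : ℝ) ≤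
      ∏ a, bregmanFactor (relDegree (minor R w v) a)) :
    (#(transversals R) : ℝ) ≤ ∏ w, bregmanFactor (relDegree R w) := by
  have hprod : 0 ≤ ∏ w, bregmanFactor (relDegree R w) :=
    prod_nonneg fun _ _ => (bregmanFactor_pos _).le
  obtain hT | ⟨e₀, he₀⟩ := (transversals R).eq_empty_or_nonempty
  · simpa [hT] using hprod
  obtain hV | hV := Nat.eq_zero_or_pos (Fintype.card V)
  · have : IsEmpty W := Fintype.card_eq_zero_iff.1 ((Fintype.card_congr e₀).trans hV)
    rw [Fintype.prod_empty, Nat.cast_le_one]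
    exact card_le_one_of_subsingleton _
  exact (pow_le_pow_iff_left₀ (Nat.cast_nonneg _) hprod
    (Nat.mul_pos hV (card_pos.2 ⟨e₀, he₀⟩)).ne').1 (pow_card_transversals_le_of_minors R ih he₀)

theorem card_transversals_le_prod_bregmanFactor (R : W → V → Prop) :
    (#(transversals R) : ℝ) ≤ ∏ w, bregmanFactor (relDegree R w) := by
  induction h : Fintype.card W using Nat.strong_induction_on generalizing V W with
  | _ N ih =>
    refine card_transversals_le_of_minors R fun w v => ih _ ?_ _ rfl
    rw [← h]
    exact Fintype.card_subtype_lt (x := w) (not_not.2 rfl)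

end Bregman

lemma Equiv.Perm.sameCycle_iff_of_eqOn {α : Type*} [Finite α] {p q : Perm α} {S : Set α}
    (hS : ∀ x ∈ S, p x ∈ S) (hpq : ∀ x ∈ S, p x = q x) {a : α} (ha : a ∈ S) (b : α) :
    p.SameCycle a b ↔ q.SameCycle a b := by
  have key (n : ℕ) : (p ^ n) a = (q ^ n) a ∧ (p ^ n) a ∈ S := by
    induction n with
    | zero => exact ⟨rfl, ha⟩
    | succ n ih =>
      rw [pow_succ', pow_succ', Perm.mul_apply, Perm.mul_apply, ← ih.1]
      exact ⟨hpq _ ih.2, hS _ ih.2⟩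
  constructor <;> intro h <;> obtain ⟨n, -, rfl⟩ := h.exists_nat_pow_eq <;>
    exact ⟨n, by rw [zpow_natCast, (key n).1]⟩

lemma Equiv.Perm.sameCycle_apply_apply_of_conj_eq_inv {α : Type*} {f z : Perm α}
    (h : f * z * f⁻¹ = z⁻¹) {a b : α} : z.SameCycle (f a) (f b) ↔ z.SameCycle a b := by
  rw [← Perm.sameCycle_inv, ← h, Perm.sameCycle_conj]
  simp

lemma Equiv.Perm.apply_zpow_apply_of_conj_eq_inv {α : Type*} {f z : Perm α}
    (h : f * z * f⁻¹ = z⁻¹) (k : ℤ) (a : α) : f ((z ^ k) a) = (z ^ (-k)) (f a) := by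
  rw [zpow_neg, ← inv_zpow, ← h, conj_zpow]
  simp

section Orientation

variable {V : Type*} {f g : Perm V}

def altStep (f g : Perm V) (a b : V) : Prop := b = f a ∨ b = g a

lemma altStep_symm (hf : Involutive f) (hg : Involutive g) (a b : V) :
    altStep f g a b → altStep f g b a := by
  rintro (rfl | rfl)
  · exact .inl (hf a).symm
  · exact .inr (hg a).symm

lemma conj_mul_eq_inv_left (hf : Involutive f) (hg : Involutive g) :
    f * (g * f) * f⁻¹ = (g * f)⁻¹ := by
  ext v
  simp [Perm.inv_def, Involutive.symm_eq_self_of_involutive f hf,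
    Involutive.symm_eq_self_of_involutive g hg, hf _]

lemma conj_mul_eq_inv_right (hf : Involutive f) (hg : Involutive g) :
    g * (g * f) * g⁻¹ = (g * f)⁻¹ := by
  ext v
  simp [Perm.inv_def, Involutive.symm_eq_self_of_involutive f hf,
    Involutive.symm_eq_self_of_involutive g hg, hg _]

-- If `(g * f) ^ k` mapped `v` to `f v`, then `(g * f) ^ (k / 2) v` would be fixed by `f` (even `k`)
-- or `(g * f) ^ ((k + 1) / 2) v` by `g` (odd `k`).
lemma not_sameCycle_apply_left (hf : Involutive f) (hg : Involutive g) (hf' : ∀ v, f v ≠ v)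
    (hg' : ∀ v, g v ≠ v) (v : V) : ¬(g * f).SameCycle v (f v) := by
  rintro ⟨k, hk⟩
  obtain ⟨j, rfl | rfl⟩ := Int.even_or_odd' k
  · apply hf' (((g * f) ^ j) v)
    rw [Perm.apply_zpow_apply_of_conj_eq_inv (conj_mul_eq_inv_left hf hg), ← hk,
      ← Perm.mul_apply, ← zpow_add, show -j + 2 * j = j by ring]
  · apply hg' (((g * f) ^ (j + 1)) v)
    have hgv : g v = ((g * f) ^ (2 * j + 2)) v := by
      rw [show 2 * j + 2 = 1 + (2 * j + 1) by ring, zpow_add, zpow_one, Perm.mul_apply, hk,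
        Perm.mul_apply, hf v]
    rw [Perm.apply_zpow_apply_of_conj_eq_inv (conj_mul_eq_inv_right hf hg), hgv,
      ← Perm.mul_apply, ← zpow_add, show -(j + 1) + (2 * j + 2) = j + 1 by ring]

lemma sameCycle_or_sameCycle_of_reflTransGen (hf : Involutive f) (hg : Involutive g) {v w : V}
    (h : ReflTransGen (altStep f g) v w) :
    (g * f).SameCycle v w ∨ (g * f).SameCycle (f v) w := by
  have hfg (a : V) : g a = (g * f) (f a) := by rw [Perm.mul_apply, hf a]
  have hconj {a b : V} := Perm.sameCycle_apply_apply_of_conj_eq_inv (a := a) (b := b)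
    (conj_mul_eq_inv_left hf hg)
  induction h with
  | refl => exact .inl (Perm.SameCycle.refl _ _)
  | @tail a b _ hab ih =>
    have hfa : (g * f).SameCycle v (f a) ∨ (g * f).SameCycle (f v) (f a) := by
      rcases ih with ih | ih
      · exact .inr (hconj.2 ih)
      · exact .inl (hf v ▸ hconj.2 ih)
    rcases hab with rfl | rfl
    · exact hfa
    · simpa only [hfg a, Perm.sameCycle_apply_right] using hfa

variable [Fintype V] [LinearOrder V]

open Classical in
noncomputable def minReachable (r : V → V → Prop) (v : V) : V :=
  ({w | ReflTransGen r v w} : Finset V).min' ⟨v, mem_filter.2 ⟨mem_univ v, .refl⟩⟩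

lemma reflTransGen_minReachable (r : V → V → Prop) (v : V) :
    ReflTransGen r v (minReachable r v) := by
  classical
  exact (mem_filter.1 (min'_mem _ _)).2

lemma minReachable_eq_of_reflTransGen {r : V → V → Prop} (hr : ∀ a b, r a b → r b a) {v w : V}
    (h : ReflTransGen r v w) : minReachable r w = minReachable r v := by
  unfold minReachable
  congr 1
  ext x
  simp only [mem_filter, mem_univ, true_and]
  have : Std.Symm r := ⟨hr⟩
  exact ⟨h.trans, (ReflTransGen.stdSymm.symm v w h).trans⟩

-- `v` lies at even distance from the least vertex of its alternating `f`/`g` cycle.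
def EvenPos (f g : Perm V) (v : V) : Prop :=
  (g * f).SameCycle (minReachable (altStep f g) v) v

lemma minReachable_apply_left (hf : Involutive f) (hg : Involutive g) (v : V) :
    minReachable (altStep f g) (f v) = minReachable (altStep f g) v :=
  minReachable_eq_of_reflTransGen (altStep_symm hf hg) (.single (.inl rfl))

lemma minReachable_apply_right (hf : Involutive f) (hg : Involutive g) (v : V) :
    minReachable (altStep f g) (g v) = minReachable (altStep f g) v :=
  minReachable_eq_of_reflTransGen (altStep_symm hf hg) (.single (.inr rfl))

lemma evenPos_apply_left_iff (hf : Involutive f) (hg : Involutive g) (hf' : ∀ v, f v ≠ v)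
    (hg' : ∀ v, g v ≠ v) (v : V) : EvenPos f g (f v) ↔ ¬EvenPos f g v := by
  unfold EvenPos
  rw [minReachable_apply_left hf hg]
  rcases sameCycle_or_sameCycle_of_reflTransGen hf hg (reflTransGen_minReachable _ v) with h | h
  · exact iff_of_false (fun h' => not_sameCycle_apply_left hf hg hf' hg' v (h.trans h'))
      (not_not.2 h.symm)
  · exact iff_of_true h.symm
      fun h' => not_sameCycle_apply_left hf hg hf' hg' v (h'.symm.trans h.symm)

lemma evenPos_apply_right_iff (hf : Involutive f) (hg : Involutive g) (hf' : ∀ v, f v ≠ v)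
    (hg' : ∀ v, g v ≠ v) (v : V) : EvenPos f g (g v) ↔ ¬EvenPos f g v := by
  rw [← evenPos_apply_left_iff hf hg hf' hg']
  unfold EvenPos
  rw [minReachable_apply_right hf hg, ← minReachable_apply_left hf hg,
    show g v = (g * f) (f v) by rw [Perm.mul_apply, hf v], Perm.sameCycle_apply_right]

lemma evenPos_mul_apply_iff (hf : Involutive f) (hg : Involutive g) (hf' : ∀ v, f v ≠ v)
    (hg' : ∀ v, g v ≠ v) (v : V) : EvenPos f g ((g * f) v) ↔ EvenPos f g v := by
  rw [Perm.mul_apply, evenPos_apply_right_iff hf hg hf' hg', evenPos_apply_left_iff hf hg hf' hg',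
    not_not]

open Classical in
noncomputable def orient (hf : Involutive f) (hg : Involutive g) (hf' : ∀ v, f v ≠ v)
    (hg' : ∀ v, g v ≠ v) : Perm V where
  toFun v := if EvenPos f g v then f v else g v
  invFun v := if EvenPos f g v then g v else f v
  left_inv v := by
    by_cases h : EvenPos f g v
    · simp [h, evenPos_apply_left_iff hf hg hf' hg', hf v]
    · simp [h, evenPos_apply_right_iff hf hg hf' hg', hg v]
  right_inv v := by
    by_cases h : EvenPos f g v
    · simp [h, evenPos_apply_right_iff hf hg hf' hg', hg v]
    · simp [h, evenPos_apply_left_iff hf hg hf' hg', hf v]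

section OrientLemmas

variable (hf : Involutive f) (hg : Involutive g) (hf' : ∀ v, f v ≠ v) (hg' : ∀ v, g v ≠ v)

lemma orient_apply_of_evenPos {v : V} (h : EvenPos f g v) : orient hf hg hf' hg' v = f v :=
  if_pos h

lemma orient_apply_of_not_evenPos {v : V} (h : ¬EvenPos f g v) :
    orient hf hg hf' hg' v = g v :=
  if_neg h

lemma orient_inv_apply_of_evenPos {v : V} (h : EvenPos f g v) :
    (orient hf hg hf' hg')⁻¹ v = g v :=
  if_pos h

lemma orient_inv_apply_of_not_evenPos {v : V} (h : ¬EvenPos f g v) :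
    (orient hf hg hf' hg')⁻¹ v = f v :=
  if_neg h

lemma orient_apply_eq_or (v : V) : orient hf hg hf' hg' v = f v ∨ orient hf hg hf' hg' v = g v := by
  by_cases h : EvenPos f g v
  · exact .inl (orient_apply_of_evenPos hf hg hf' hg' h)
  · exact .inr (orient_apply_of_not_evenPos hf hg hf' hg' h)

lemma altStep_orient :
    altStep (orient hf hg hf' hg') (orient hf hg hf' hg')⁻¹ = altStep f g := by
  ext a b
  by_cases h : EvenPos f g a
  · simp [altStep, orient_apply_of_evenPos hf hg hf' hg' h,
      orient_inv_apply_of_evenPos hf hg hf' hg' h]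
  · simp [altStep, orient_apply_of_not_evenPos hf hg hf' hg' h,
      orient_inv_apply_of_not_evenPos hf hg hf' hg' h, or_comm]

lemma orient_mul_self_apply {v : V} (h : EvenPos f g v) :
    (orient hf hg hf' hg' * orient hf hg hf' hg') v = (g * f) v := by
  have hfv : ¬EvenPos f g (f v) := fun h' =>
    (evenPos_apply_left_iff hf hg hf' hg' v).1 h' h
  rw [Perm.mul_apply, orient_apply_of_evenPos hf hg hf' hg' h,
    orient_apply_of_not_evenPos hf hg hf' hg' hfv, Perm.mul_apply]

-- `orient` takes the same steps as `f, g`, so it has the same least reachable vertices, and its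
-- square agrees with `g * f` on even positions.
lemma evenPos_iff_sameCycle_orient (v : V) :
    EvenPos f g v ↔ (orient hf hg hf' hg' * orient hf hg hf' hg').SameCycle
      (minReachable (altStep (orient hf hg hf' hg') (orient hf hg hf' hg')⁻¹) v) v := by
  rw [altStep_orient]
  have hroot : EvenPos f g (minReachable (altStep f g) v) := by
    unfold EvenPos
    rw [minReachable_eq_of_reflTransGen (altStep_symm hf hg) (reflTransGen_minReachable _ v)]
  exact Perm.sameCycle_iff_of_eqOn (S := {x | EvenPos f g x})
    (fun x hx => (evenPos_mul_apply_iff hf hg hf' hg' x).2 hx)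
    (fun x hx => (orient_mul_self_apply hf hg hf' hg' hx).symm) hroot v

lemma apply_left_eq_orient (v : V) [Decidable (EvenPos f g v)] :
    f v = if EvenPos f g v then orient hf hg hf' hg' v else (orient hf hg hf' hg')⁻¹ v := by
  split_ifs with h
  · exact (orient_apply_of_evenPos hf hg hf' hg' h).symm
  · exact (orient_inv_apply_of_not_evenPos hf hg hf' hg' h).symm

lemma apply_right_eq_orient (v : V) [Decidable (EvenPos f g v)] :
    g v = if EvenPos f g v then (orient hf hg hf' hg')⁻¹ v else orient hf hg hf' hg' v := by
  split_ifs with h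
  · exact (orient_inv_apply_of_evenPos hf hg hf' hg' h).symm
  · exact (orient_apply_of_not_evenPos hf hg hf' hg' h).symm

end OrientLemmas

theorem orient_injective {f₁ g₁ f₂ g₂ : Perm V}
    {hf₁ : Involutive f₁} {hg₁ : Involutive g₁} {hf₁' : ∀ v, f₁ v ≠ v} {hg₁' : ∀ v, g₁ v ≠ v}
    {hf₂ : Involutive f₂} {hg₂ : Involutive g₂} {hf₂' : ∀ v, f₂ v ≠ v} {hg₂' : ∀ v, g₂ v ≠ v}
    (h : orient hf₁ hg₁ hf₁' hg₁' = orient hf₂ hg₂ hf₂' hg₂') : f₁ = f₂ ∧ g₁ = g₂ := by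
  classical
  have heven (v : V) : EvenPos f₁ g₁ v ↔ EvenPos f₂ g₂ v := by
    rw [evenPos_iff_sameCycle_orient hf₁ hg₁ hf₁' hg₁',
      evenPos_iff_sameCycle_orient hf₂ hg₂ hf₂' hg₂', h]
  constructor <;> ext v
  · rw [apply_left_eq_orient hf₁ hg₁ hf₁' hg₁', apply_left_eq_orient hf₂ hg₂ hf₂' hg₂', h,
      if_congr (heven v) rfl rfl]
  · rw [apply_right_eq_orient hf₁ hg₁ hf₁' hg₁', apply_right_eq_orient hf₂ hg₂ hf₂' hg₂', h,
      if_congr (heven v) rfl rfl]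

end Orientation

namespace IsNMatching

variable {V : Type*} {G : SimpleGraph V} {k : ℕ} {s : Set (Sym2 V)}

lemma eq_of_mem_of_mem (hs : IsNMatching G k s) {e₁ e₂ : Sym2 V} (he₁ : e₁ ∈ s) (he₂ : e₂ ∈ s)
    {v : V} (hv₁ : v ∈ e₁) (hv₂ : v ∈ e₂) : e₁ = e₂ := by
  by_contra hne
  exact hs.2.2 he₁ he₂ hne v ⟨hv₁, hv₂⟩

lemma exists_mem [Fintype V] (hV : Fintype.card V = 2 * k) (hs : IsNMatching G k s) (v : V) :
    ∃ e ∈ s, v ∈ e := by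
  classical
  set F := (Set.toFinite s).toFinset
  have hcover : F.biUnion Sym2.toFinset = univ := by
    refine eq_univ_of_card _ ?_
    rw [card_biUnion, sum_congr rfl fun e he => Sym2.card_toFinset_of_not_isDiag e
      (G.not_isDiag_of_mem_edgeSet (hs.1 ((Set.toFinite s).mem_toFinset.1 he))), sum_const,
      smul_eq_mul, ← Set.ncard_eq_toFinset_card _, hs.2.1, hV, mul_comm]
    intro e₁ he₁ e₂ he₂ hne
    rw [Function.onFun, disjoint_left]
    intro w hw₁ hw₂
    exact hs.2.2 ((Set.toFinite s).mem_toFinset.1 he₁) ((Set.toFinite s).mem_toFinset.1 he₂) hne w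
      ⟨Sym2.mem_toFinset.1 hw₁, Sym2.mem_toFinset.1 hw₂⟩
  obtain ⟨e, he, hv⟩ := mem_biUnion.1 (hcover ▸ mem_univ v)
  exact ⟨e, (Set.toFinite s).mem_toFinset.1 he, Sym2.mem_toFinset.1 hv⟩

lemma exists_involution [Fintype V] (hV : Fintype.card V = 2 * k) (hs : IsNMatching G k s) :
    ∃ f : Perm V, (Involutive f ∧ ∀ v, G.Adj v (f v)) ∧ Set.range (fun v => s(v, f v)) = s := by
  have hpartner (v : V) : ∃ w, s(v, w) ∈ s := by
    obtain ⟨e, he, hv⟩ := hs.exists_mem hV v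
    exact ⟨Sym2.Mem.other hv, by rwa [Sym2.other_spec]⟩
  choose partner hpartner using hpartner
  have hadj (v : V) : G.Adj v (partner v) := hs.1 (hpartner v)
  have hpartner_involutive : Involutive partner := fun v => by
    rcases Sym2.eq_iff.1 (hs.eq_of_mem_of_mem (hpartner (partner v)) (hpartner v)
      (Sym2.mem_mk_left _ _) (Sym2.mem_mk_right _ _)) with ⟨h, -⟩ | ⟨-, h⟩
    · exact absurd h (hadj v).ne'
    · exact h
  refine ⟨hpartner_involutive.toPerm, ⟨hpartner_involutive, hadj⟩,
    Set.Subset.antisymm (Set.range_subset_iff.2 hpartner) ?_⟩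
  intro e he
  induction e using Sym2.ind with
  | _ a b =>
    exact ⟨a, hs.eq_of_mem_of_mem (hpartner a) he (Sym2.mem_mk_left _ _) (Sym2.mem_mk_left _ _)⟩

end IsNMatching

section MatchingInvolutions

variable {V : Type*} [Fintype V] (G : SimpleGraph V)

abbrev SimpleGraph.MatchingInvolution : Type _ := {f : Perm V // Involutive f ∧ ∀ v, G.Adj v (f v)}

lemma matchingCount_le_card_matchingInvolution {k : ℕ} (hV : Fintype.card V = 2 * k) :
    matchingCount G k ≤ Nat.card G.MatchingInvolution := by
  rw [matchingCount, ← Nat.card_coe_set_eq]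
  choose f hf using fun s : {s | IsNMatching G k s} => s.2.exists_involution hV
  refine Nat.card_le_card_of_injective (fun s => ⟨f s, (hf s).1⟩) fun s₁ s₂ h => ?_
  have hfs : f s₁ = f s₂ := congrArg Subtype.val h
  exact Subtype.ext ((hf s₁).2.symm.trans (hfs ▸ (hf s₂).2))

lemma card_matchingInvolution_sq_le [LinearOrder V] :
    Nat.card G.MatchingInvolution ^ 2 ≤ #(transversals G.Adj) := by
  classical
  have hne (f : G.MatchingInvolution) (v : V) : f.1 v ≠ v := (f.2.2 v).ne'
  let σ (p : G.MatchingInvolution × G.MatchingInvolution) : Perm V :=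
    orient p.1.2.1 p.2.2.1 (hne p.1) (hne p.2)
  have hσ (p) : σ p ∈ transversals G.Adj := by
    simp only [transversals, mem_filter, mem_univ, true_and]
    intro v
    rcases orient_apply_eq_or p.1.2.1 p.2.2.1 (hne p.1) (hne p.2) v with h | h <;> rw [h]
    exacts [p.1.2.2 v, p.2.2.2 v]
  rw [sq, ← Nat.card_prod, ← Nat.card_eq_finsetCard]
  refine Nat.card_le_card_of_injective (fun p => ⟨σ p, hσ p⟩) fun p q h => ?_
  obtain ⟨h₁, h₂⟩ := orient_injective (show σ p = σ q from congrArg Subtype.val h)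
  exact Prod.ext (Subtype.ext h₁) (Subtype.ext h₂)

lemma relDegree_adj [DecidableRel G.Adj] (v : V) : relDegree G.Adj v = G.degree v := by
  rw [relDegree, ← G.card_neighborFinset_eq_degree, G.neighborFinset_eq_filter]
  convert rfl

end MatchingInvolutions

lemma bregmanFactor_pow_two_mul (r n : ℕ) :
    bregmanFactor r ^ (2 * n) = ((r ! : ℝ) ^ ((n : ℝ) / r)) ^ 2 := by
  rw [bregmanFactor, ← Real.rpow_natCast, ← Real.rpow_natCast _ 2, ← Real.rpow_mul (by positivity),
    ← Real.rpow_mul (by positivity)]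
  congr 1
  push_cast
  ring

theorem card_perfectMatchings_le_rpow_general (n r : ℕ)
    (G : SimpleGraph (Fin (2 * n))) [DecidableRel G.Adj] (hreg : G.IsRegularOfDegree r) :
    (matchingCount G n : ℝ) ≤ ((Nat.factorial r : ℝ)) ^ ((n : ℝ) / (r : ℝ)) := by
  set m := Nat.card G.MatchingInvolution
  have hm : (m : ℝ) ^ 2 ≤ ((r ! : ℝ) ^ ((n : ℝ) / r)) ^ 2 :=
    calc (m : ℝ) ^ 2 ≤ #(transversals G.Adj) := by
          exact_mod_cast card_matchingInvolution_sq_le G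
      _ ≤ ∏ v, bregmanFactor (relDegree G.Adj v) := card_transversals_le_prod_bregmanFactor _
      _ = bregmanFactor r ^ (2 * n) := by
          simp [relDegree_adj, hreg.degree_eq]
      _ = _ := bregmanFactor_pow_two_mul r n
  calc (matchingCount G n : ℝ) ≤ m := by
        exact_mod_cast matchingCount_le_card_matchingInvolution G (Fintype.card_fin _)
    _ ≤ _ := (pow_le_pow_iff_left₀ (by positivity) (by positivity) two_ne_zero).1 hm

/-- For every `r`-regular simple graph `G` on `2n` vertices, the number of perfect
matchings of `G` is at most `(r!)^(n/r)`. -/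
theorem card_perfectMatchings_le_rpow (n r : ℕ) (hr : 1 ≤ r)
    (G : SimpleGraph (Fin (2 * n))) [DecidableRel G.Adj] (hreg : G.IsRegularOfDegree r) :
    (matchingCount G n : ℝ) ≤ ((Nat.factorial r : ℝ)) ^ ((n : ℝ) / (r : ℝ)) :=
  card_perfectMatchings_le_rpow_general n r G hreg
end

section
/- For all n ≥ 1: e^{-n}·√2 < (2n)! / ((2n-1)^n · 2^n · n!). -/
/-!
Write `(2n)! / (2ⁿ n!) = (2n - 1)!!`. The effective Stirling bounds `√π ≤ stirlingSeq m ≤ e / √2`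
(for `m ≥ 1`, the sequence decreasing to `√π`) give `(2n - 1)!! ≥ (2√π / e) (2n / e)ⁿ`, and
Bernoulli's inequality gives `(2n / (2n - 1))ⁿ ≥ 3 / 2`. The theorem then reduces to the numerical
inequality `√2 e < 3 √π`.
-/

open Real Nat Stirling

theorem stirlingSeq_le_of_le {m n : ℕ} (hm : m ≠ 0) (hmn : m ≤ n) :
    stirlingSeq n ≤ stirlingSeq m := by
  obtain ⟨k, rfl⟩ := exists_eq_succ_of_ne_zero hm
  obtain ⟨l, rfl⟩ := exists_eq_succ_of_ne_zero (by omega : n ≠ 0)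
  exact stirlingSeq'_antitone (succ_le_succ_iff.mp hmn)

theorem factorial_le_exp_one_mul_sqrt_mul_pow {n : ℕ} (hn : n ≠ 0) :
    (n ! : ℝ) ≤ exp 1 * √n * (n / exp 1) ^ n := by
  have h := stirlingSeq_le_of_le one_ne_zero (one_le_iff_ne_zero.mpr hn)
  rw [stirlingSeq_one, stirlingSeq, div_le_iff₀ (by positivity)] at h
  calc (n ! : ℝ) ≤ exp 1 / √2 * (√(2 * n) * (n / exp 1) ^ n) := h
    _ = exp 1 * √n * (n / exp 1) ^ n := by
      rw [sqrt_mul zero_le_two]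
      field_simp

theorem mul_pow_le_factorial_two_mul_div {n : ℕ} (hn : n ≠ 0) :
    2 * √π / exp 1 * (2 * n / exp 1) ^ n ≤ ((2 * n) ! : ℝ) / (2 ^ n * n !) := by
  have hlow : √(2 * π * (2 * n)) * (2 * n / exp 1) ^ (2 * n) ≤ ((2 * n) ! : ℝ) := by
    exact_mod_cast le_factorial_stirling (2 * n)
  rw [le_div_iff₀ (by positivity)]
  calc 2 * √π / exp 1 * (2 * n / exp 1) ^ n * (2 ^ n * n !)
      ≤ 2 * √π / exp 1 * (2 * n / exp 1) ^ n * (2 ^ n * (exp 1 * √n * (n / exp 1) ^ n)) := by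
        gcongr
        exact factorial_le_exp_one_mul_sqrt_mul_pow hn
    _ = √(2 * π * (2 * n)) * (2 * n / exp 1) ^ (2 * n) := by
        rw [show (2 : ℝ) * π * (2 * n) = 2 ^ 2 * (π * n) by ring, sqrt_mul' _ (by positivity),
          sqrt_sq zero_le_two, sqrt_mul' _ (by positivity), two_mul n, pow_add]
        field_simp
        ring
    _ ≤ ((2 * n) ! : ℝ) := hlow

theorem three_halves_mul_pow_le {n : ℕ} (hn : n ≠ 0) :
    3 / 2 * (2 * n - 1 : ℝ) ^ n ≤ (2 * n) ^ n := by
  obtain ⟨m, rfl⟩ := exists_eq_succ_of_ne_zero hn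
  have hbern := pow_add_mul_le_add_pow (a := (2 * m + 1 : ℝ)) (b := 1) (by positivity)
    (by positivity) (m + 1)
  have hpos : (0 : ℝ) ≤ (2 * m + 1) ^ m := by positivity
  rw [show (2 * ((m + 1 : ℕ) : ℝ) - 1) = 2 * m + 1 by push_cast; ring,
    show (2 * ((m + 1 : ℕ) : ℝ)) = 2 * m + 1 + 1 by push_cast; ring]
  refine le_trans ?_ hbern
  rw [add_tsub_cancel_right, pow_succ]
  push_cast
  nlinarith

theorem sqrt_two_lt_three_mul_sqrt_pi_div_exp_one : √2 < 3 * √π / exp 1 := by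
  rw [lt_div_iff₀ (exp_pos 1), show (3 : ℝ) = √(3 ^ 2) from (sqrt_sq zero_le_three).symm,
    ← sqrt_mul (by positivity), ← sqrt_sq (exp_pos 1).le, ← sqrt_mul zero_le_two]
  apply sqrt_lt_sqrt (by positivity)
  nlinarith [exp_one_lt_three, exp_pos 1, pi_gt_three]

/-- `e⁻ⁿ √2 < (2n)! / ((2n-1)ⁿ 2ⁿ n!)` for all `n ≥ 1`. -/
theorem exp_sqrt_lt_normalized_pm_count (n : ℕ) (hn : 1 ≤ n) :
    Real.exp (-(n : ℝ)) * Real.sqrt 2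
      < (Nat.factorial (2 * n) : ℝ) / ((2 * (n : ℝ) - 1) ^ n * 2 ^ n * Nat.factorial n) := by
  have hn0 : n ≠ 0 := one_le_iff_ne_zero.mp hn
  have hodd : (0 : ℝ) < 2 * n - 1 := by
    have : (1 : ℝ) ≤ n := by exact_mod_cast hn
    linarith
  rw [mul_assoc, div_mul_eq_div_div_swap, lt_div_iff₀ (by positivity)]
  calc exp (-n) * √2 * (2 * n - 1) ^ n
      < exp (-n) * (3 * √π / exp 1) * (2 * n - 1) ^ n := by
        gcongr
        exact sqrt_two_lt_three_mul_sqrt_pi_div_exp_one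
    _ = 2 * √π / exp 1 * exp (-n) * (3 / 2 * (2 * n - 1) ^ n) := by ring
    _ ≤ 2 * √π / exp 1 * exp (-n) * (2 * n) ^ n := by
        gcongr
        exact three_halves_mul_pow_le hn0
    _ = 2 * √π / exp 1 * (2 * n / exp 1) ^ n := by
        rw [div_pow, exp_one_pow, exp_neg]
        ring
    _ ≤ ((2 * n) ! : ℝ) / (2 ^ n * n !) := mul_pow_le_factorial_two_mul_div hn0
end

section
/- For every r ≥ 1, the maximum matching size of any r-regular loopless multigraph G on n vertices is at least n/3. -/
private lemma pair_exists {n : ℕ} (A : Matrix (Fin n) (Fin n) ℕ) (hsym : A.IsSymm)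
    {x y : Fin n} (hxy : x ≠ y) (hA : 0 < A x y) :
    ∃ q : Fin n × Fin n, q.1 < q.2 ∧ 0 < A q.1 q.2 ∧
      (q.1 = x ∨ q.1 = y) ∧ (q.2 = x ∨ q.2 = y) ∧
      (q.1 = x ∨ q.2 = x) ∧ (q.1 = y ∨ q.2 = y) := by
  rcases lt_or_gt_of_ne hxy with h | h
  · exact ⟨(x, y), h, hA, Or.inl rfl, Or.inr rfl, Or.inl rfl, Or.inr rfl⟩
  · refine ⟨(y, x), h, ?_, Or.inr rfl, Or.inl rfl, Or.inr rfl, Or.inl rfl⟩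
    show 0 < A y x
    rw [hsym.apply x y]; exact hA

/-- Every `r`-regular loopless multigraph on `n` vertices (given by its symmetric
adjacency matrix `A` with zero diagonal and row sums `r`) has a matching of size at
least `n/3`, i.e. at least `⌈n/3⌉` pairwise vertex-disjoint edges. -/
theorem regular_multigraph_matching (n r : ℕ) (hr : 1 ≤ r)
    (A : Matrix (Fin n) (Fin n) ℕ) (hsym : A.IsSymm)
    (hdiag : ∀ i, A i i = 0) (hreg : ∀ i, ∑ j, A i j = r) :
    ∃ s : Finset (Fin n × Fin n),
      (∀ p ∈ s, p.1 < p.2 ∧ 0 < A p.1 p.2) ∧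
      ((s : Set (Fin n × Fin n)).Pairwise fun p q =>
        p.1 ≠ q.1 ∧ p.1 ≠ q.2 ∧ p.2 ≠ q.1 ∧ p.2 ≠ q.2) ∧
      n ≤ 3 * s.card := by
  classical
  have hcol : ∀ i, ∑ j, A j i = r := by
    intro i
    rw [← hreg i]
    exact Finset.sum_congr rfl fun j _ => hsym.apply i j
  -- choose a maximum matching s
  obtain ⟨s, ⟨hs1, hs2⟩, hmax⟩ :
      ∃ s : Finset (Fin n × Fin n),
        ((∀ p ∈ s, p.1 < p.2 ∧ 0 < A p.1 p.2) ∧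
          ((s : Set (Fin n × Fin n)).Pairwise fun p q =>
            p.1 ≠ q.1 ∧ p.1 ≠ q.2 ∧ p.2 ≠ q.1 ∧ p.2 ≠ q.2)) ∧
        ∀ t : Finset (Fin n × Fin n),
          ((∀ p ∈ t, p.1 < p.2 ∧ 0 < A p.1 p.2) ∧
            ((t : Set (Fin n × Fin n)).Pairwise fun p q =>
              p.1 ≠ q.1 ∧ p.1 ≠ q.2 ∧ p.2 ≠ q.1 ∧ p.2 ≠ q.2)) →
          t.card ≤ s.card := by
    obtain ⟨s, hsmem, hmaxi⟩ := Finset.exists_max_image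
      (Finset.univ.filter fun t : Finset (Fin n × Fin n) =>
        (∀ p ∈ t, p.1 < p.2 ∧ 0 < A p.1 p.2) ∧
        ((t : Set (Fin n × Fin n)).Pairwise fun p q =>
          p.1 ≠ q.1 ∧ p.1 ≠ q.2 ∧ p.2 ≠ q.1 ∧ p.2 ≠ q.2))
      Finset.card
      ⟨∅, Finset.mem_filter.mpr ⟨Finset.mem_univ _, by simp, by simp⟩⟩
    exact ⟨s, (Finset.mem_filter.mp hsmem).2,
      fun t ht => hmaxi t (Finset.mem_filter.mpr ⟨Finset.mem_univ _, ht⟩)⟩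
  refine ⟨s, hs1, hs2, ?_⟩
  set M : Finset (Fin n) := s.biUnion (fun p => {p.1, p.2}) with hMdef
  have hmemM : ∀ p ∈ s, p.1 ∈ M ∧ p.2 ∈ M := by
    intro p hp
    constructor <;> · rw [hMdef]; exact Finset.mem_biUnion.mpr ⟨p, hp, by simp⟩
  set U : Finset (Fin n) := Finset.univ \ M with hUdef
  have hUnotM : ∀ u ∈ U, u ∉ M := fun u hu => (Finset.mem_sdiff.mp hu).2
  -- every neighbor of an uncovered vertex is covered
  have hnbr : ∀ u ∈ U, ∀ v : Fin n, 0 < A u v → v ∈ M := by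
    intro u hu v hAv
    by_contra hvM
    have huM : u ∉ M := hUnotM u hu
    have huv : u ≠ v := by
      rintro rfl
      rw [hdiag u] at hAv
      exact Nat.lt_irrefl 0 hAv
    obtain ⟨q, hqlt, hqA, hc1, hc2, -, -⟩ := pair_exists A hsym huv hAv
    have hq1M : q.1 ∉ M := by rcases hc1 with h | h <;> rw [h] <;> assumption
    have hq2M : q.2 ∉ M := by rcases hc2 with h | h <;> rw [h] <;> assumption
    have hqs : q ∉ s := fun h => hq1M (hmemM q h).1
    have hins := hmax (insert q s) ?_
    · rw [Finset.card_insert_of_notMem hqs] at hins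
      omega
    refine ⟨?_, ?_⟩
    · intro p hp
      rcases Finset.mem_insert.mp hp with rfl | hp
      · exact ⟨hqlt, hqA⟩
      · exact hs1 p hp
    · rw [Finset.coe_insert]
      refine Set.pairwise_insert.mpr ⟨hs2, ?_⟩
      intro p hp _
      rw [Finset.mem_coe] at hp
      have h1 : p.1 ∈ M := (hmemM p hp).1
      have h2 : p.2 ∈ M := (hmemM p hp).2
      have e1 : q.1 ≠ p.1 := fun e => hq1M (by rw [e]; exact h1)
      have e2 : q.1 ≠ p.2 := fun e => hq1M (by rw [e]; exact h2)
      have e3 : q.2 ≠ p.1 := fun e => hq2M (by rw [e]; exact h1)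
      have e4 : q.2 ≠ p.2 := fun e => hq2M (by rw [e]; exact h2)
      exact ⟨⟨e1, e2, e3, e4⟩, e1.symm, e3.symm, e2.symm, e4.symm⟩
  -- augmentation: a matching edge cannot have two distinct uncovered neighbors
  -- on its two endpoints
  have haug : ∀ p ∈ s, ∀ u ∈ U, ∀ v ∈ U, 0 < A u p.1 → 0 < A v p.2 → u = v := by
    intro p hp u hu v hv hua hvb
    by_contra huv
    have huM : u ∉ M := hUnotM u hu
    have hvM : v ∉ M := hUnotM v hv
    have hp1M : p.1 ∈ M := (hmemM p hp).1
    have hp2M : p.2 ∈ M := (hmemM p hp).2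
    have hup1 : u ≠ p.1 := fun e => huM (by rw [e]; exact hp1M)
    have hvp2 : v ≠ p.2 := fun e => hvM (by rw [e]; exact hp2M)
    obtain ⟨q1, h1lt, h1A, h1c1, h1c2, h1u, h1a⟩ := pair_exists A hsym hup1 hua
    obtain ⟨q2, h2lt, h2A, h2c1, h2c2, h2v, h2b⟩ := pair_exists A hsym hvp2 hvb
    have hp12 : p.1 ≠ p.2 := (hs1 p hp).1.ne
    have hne : ∀ x y : Fin n, (x = u ∨ x = p.1) → (y = v ∨ y = p.2) → x ≠ y := by
      rintro x y (rfl | rfl) (rfl | rfl)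
      · exact huv
      · exact fun e => huM (by rw [e]; exact hp2M)
      · exact fun e => hvM (by rw [← e]; exact hp1M)
      · exact hp12
    have hq1e : ∀ p' ∈ s.erase p, q1.1 ≠ p'.1 ∧ q1.1 ≠ p'.2 ∧ q1.2 ≠ p'.1 ∧ q1.2 ≠ p'.2 := by
      intro p' hp'
      have hps : p' ∈ s := Finset.mem_of_mem_erase hp'
      have hpp' : p ≠ p' := fun e => (Finset.ne_of_mem_erase hp') e.symm
      obtain ⟨d1, d2, d3, d4⟩ := hs2 (Finset.mem_coe.mpr hp) (Finset.mem_coe.mpr hps) hpp'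
      have key : ∀ x : Fin n, (x = u ∨ x = p.1) → x ≠ p'.1 ∧ x ≠ p'.2 := by
        rintro x (rfl | rfl)
        · exact ⟨fun e => huM (by rw [e]; exact (hmemM p' hps).1),
                 fun e => huM (by rw [e]; exact (hmemM p' hps).2)⟩
        · exact ⟨d1, d2⟩
      exact ⟨(key q1.1 h1c1).1, (key q1.1 h1c1).2, (key q1.2 h1c2).1, (key q1.2 h1c2).2⟩
    have hq2e : ∀ p' ∈ s.erase p, q2.1 ≠ p'.1 ∧ q2.1 ≠ p'.2 ∧ q2.2 ≠ p'.1 ∧ q2.2 ≠ p'.2 := by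
      intro p' hp'
      have hps : p' ∈ s := Finset.mem_of_mem_erase hp'
      have hpp' : p ≠ p' := fun e => (Finset.ne_of_mem_erase hp') e.symm
      obtain ⟨d1, d2, d3, d4⟩ := hs2 (Finset.mem_coe.mpr hp) (Finset.mem_coe.mpr hps) hpp'
      have key : ∀ x : Fin n, (x = v ∨ x = p.2) → x ≠ p'.1 ∧ x ≠ p'.2 := by
        rintro x (rfl | rfl)
        · exact ⟨fun e => hvM (by rw [e]; exact (hmemM p' hps).1),
                 fun e => hvM (by rw [e]; exact (hmemM p' hps).2)⟩
        · exact ⟨d3, d4⟩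
      exact ⟨(key q2.1 h2c1).1, (key q2.1 h2c1).2, (key q2.2 h2c2).1, (key q2.2 h2c2).2⟩
    have e11 : q1.1 ≠ q2.1 := hne _ _ h1c1 h2c1
    have e12 : q1.1 ≠ q2.2 := hne _ _ h1c1 h2c2
    have e21 : q1.2 ≠ q2.1 := hne _ _ h1c2 h2c1
    have e22 : q1.2 ≠ q2.2 := hne _ _ h1c2 h2c2
    have hq1s : q1 ∉ s := by
      intro h
      rcases h1u with e | e
      · exact huM (by rw [← e]; exact (hmemM q1 h).1)
      · exact huM (by rw [← e]; exact (hmemM q1 h).2)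
    have hq2s : q2 ∉ s := by
      intro h
      rcases h2v with e | e
      · exact hvM (by rw [← e]; exact (hmemM q2 h).1)
      · exact hvM (by rw [← e]; exact (hmemM q2 h).2)
    have hq1q2 : q1 ≠ q2 := by
      intro e
      rcases h1u with h | h
      · exact hne u q2.1 (Or.inl rfl) h2c1 (by rw [← h, e])
      · exact hne u q2.2 (Or.inl rfl) h2c2 (by rw [← h, e])
    have hq2ne : q2 ∉ s.erase p := fun h => hq2s (Finset.mem_of_mem_erase h)
    have hq1ne : q1 ∉ insert q2 (s.erase p) := by
      intro h
      rcases Finset.mem_insert.mp h with e | h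
      · exact hq1q2 e
      · exact hq1s (Finset.mem_of_mem_erase h)
    have hone : 1 ≤ s.card := Finset.card_pos.mpr ⟨p, hp⟩
    have hins := hmax (insert q1 (insert q2 (s.erase p))) ?_
    · rw [Finset.card_insert_of_notMem hq1ne, Finset.card_insert_of_notMem hq2ne,
        Finset.card_erase_of_mem hp] at hins
      omega
    refine ⟨?_, ?_⟩
    · intro p' hp'
      rcases Finset.mem_insert.mp hp' with rfl | hp'
      · exact ⟨h1lt, h1A⟩
      rcases Finset.mem_insert.mp hp' with rfl | hp'
      · exact ⟨h2lt, h2A⟩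
      · exact hs1 p' (Finset.mem_of_mem_erase hp')
    · rw [Finset.coe_insert, Finset.coe_insert]
      have hbase : ((s.erase p : Finset (Fin n × Fin n)) : Set (Fin n × Fin n)).Pairwise
          fun p q => p.1 ≠ q.1 ∧ p.1 ≠ q.2 ∧ p.2 ≠ q.1 ∧ p.2 ≠ q.2 :=
        hs2.mono (Finset.coe_subset.mpr (Finset.erase_subset _ _))
      refine Set.pairwise_insert.mpr ⟨Set.pairwise_insert.mpr ⟨hbase, ?_⟩, ?_⟩
      · intro p' hp' _
        rw [Finset.mem_coe] at hp'
        obtain ⟨d1, d2, d3, d4⟩ := hq2e p' hp'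
        exact ⟨⟨d1, d2, d3, d4⟩, d1.symm, d3.symm, d2.symm, d4.symm⟩
      · intro b hb _
        rcases hb with rfl | hb
        · exact ⟨⟨e11, e12, e21, e22⟩, e11.symm, e21.symm, e12.symm, e22.symm⟩
        · rw [Finset.mem_coe] at hb
          obtain ⟨d1, d2, d3, d4⟩ := hq1e b hb
          exact ⟨⟨d1, d2, d3, d4⟩, d1.symm, d3.symm, d2.symm, d4.symm⟩
  -- counting: each uncovered vertex sends all r edges into matched pairs
  have hdisj : (↑s : Set (Fin n × Fin n)).PairwiseDisjoint
      (fun p : Fin n × Fin n => ({p.1, p.2} : Finset (Fin n))) := by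
    intro p hp q hq hpq
    obtain ⟨d1, d2, d3, d4⟩ := hs2 hp hq hpq
    simp only [Function.onFun]
    rw [Finset.disjoint_left]
    intro a ha hb
    simp only [Finset.mem_insert, Finset.mem_singleton] at ha hb
    rcases ha with rfl | rfl
    · rcases hb with e | e
      · exact d1 e
      · exact d2 e
    · rcases hb with e | e
      · exact d3 e
      · exact d4 e
  have hUsum : ∀ u ∈ U, ∑ p ∈ s, (A u p.1 + A u p.2) = r := by
    intro u hu
    have h1 : ∑ j ∈ M, A u j = r := by
      rw [← hreg u]
      refine Finset.sum_subset (Finset.subset_univ M) ?_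
      intro j _ hj
      by_contra h
      exact hj (hnbr u hu j (Nat.pos_of_ne_zero h))
    rw [← h1, hMdef, Finset.sum_biUnion hdisj]
    refine Finset.sum_congr rfl ?_
    intro p hp
    rw [Finset.sum_pair (hs1 p hp).1.ne]
  have hkey : ∀ p ∈ s, ∑ u ∈ U, (A u p.1 + A u p.2) ≤ r := by
    intro p hp
    by_cases ha : ∃ u ∈ U, 0 < A u p.1
    · by_cases hb : ∃ v ∈ U, 0 < A v p.2
      · obtain ⟨w, hw, hwa⟩ := ha
        obtain ⟨w', hw', hwb⟩ := hb
        obtain rfl : w = w' := haug p hp w hw w' hw' hwa hwb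
        have hsingle : ∑ u ∈ U, (A u p.1 + A u p.2) = A w p.1 + A w p.2 := by
          refine Finset.sum_eq_single_of_mem w hw ?_
          intro u hu hune
          have h1 : A u p.1 = 0 := by
            by_contra h
            exact hune (haug p hp u hu w hw (Nat.pos_of_ne_zero h) hwb)
          have h2 : A u p.2 = 0 := by
            by_contra h
            exact hune ((haug p hp w hw u hu hwa (Nat.pos_of_ne_zero h)).symm)
          omega
        rw [hsingle]
        calc A w p.1 + A w p.2 = ∑ j ∈ ({p.1, p.2} : Finset (Fin n)), A w j :=
              (Finset.sum_pair (hs1 p hp).1.ne).symm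
          _ ≤ ∑ j, A w j := Finset.sum_le_sum_of_subset (Finset.subset_univ _)
          _ = r := hreg w
      · push_neg at hb
        have heq : ∑ u ∈ U, (A u p.1 + A u p.2) = ∑ u ∈ U, A u p.1 :=
          Finset.sum_congr rfl fun u hu => by
            have := hb u hu; omega
        rw [heq]
        calc ∑ u ∈ U, A u p.1 ≤ ∑ j, A j p.1 :=
              Finset.sum_le_sum_of_subset (Finset.subset_univ _)
          _ = r := hcol p.1
    · push_neg at ha
      have heq : ∑ u ∈ U, (A u p.1 + A u p.2) = ∑ u ∈ U, A u p.2 :=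
        Finset.sum_congr rfl fun u hu => by
          have := ha u hu; omega
      rw [heq]
      calc ∑ u ∈ U, A u p.2 ≤ ∑ j, A j p.2 :=
            Finset.sum_le_sum_of_subset (Finset.subset_univ _)
        _ = r := hcol p.2
  have hmain : r * U.card ≤ r * s.card := by
    calc r * U.card = ∑ _u ∈ U, r := by rw [Finset.sum_const, smul_eq_mul, mul_comm]
      _ = ∑ u ∈ U, ∑ p ∈ s, (A u p.1 + A u p.2) :=
          Finset.sum_congr rfl fun u hu => (hUsum u hu).symm
      _ = ∑ p ∈ s, ∑ u ∈ U, (A u p.1 + A u p.2) := Finset.sum_comm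
      _ ≤ ∑ _p ∈ s, r := Finset.sum_le_sum hkey
      _ = r * s.card := by rw [Finset.sum_const, smul_eq_mul, mul_comm]
  have hUcard : U.card ≤ s.card := Nat.le_of_mul_le_mul_left hmain hr
  have hMcard : M.card ≤ 2 * s.card := by
    calc M.card ≤ ∑ p ∈ s, ({p.1, p.2} : Finset (Fin n)).card := Finset.card_biUnion_le
      _ ≤ ∑ _p ∈ s, 2 := Finset.sum_le_sum fun p _ =>
          le_trans (Finset.card_insert_le _ _) (by simp)
      _ = 2 * s.card := by rw [Finset.sum_const, smul_eq_mul, mul_comm]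
  have hUM : U.card = n - M.card := by
    rw [hUdef, Finset.card_sdiff_of_subset (Finset.subset_univ M), Finset.card_univ, Fintype.card_fin]
  have hMn : M.card ≤ n := by
    simpa using Finset.card_le_univ M
  omega
end

section
/- A symmetric doubly stochastic n×n matrix F is an extreme point of the polytope of symmetric doubly stochastic matrices if and only if, up to simultaneous permutation of rows and columns, F is block diagonal with blocks of the forms: the 1×1 matrix [1], the 2×2 matrix [[0,1],[1,0]], or (1/2)A(C_{2j-1}) for odd cycles C_{2j-1} with j ≥ 2. -/
/-- The polytope of `n × n` symmetric doubly stochastic matrices. -/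
def symDS (n : ℕ) : Set (Matrix (Fin n) (Fin n) ℝ) :=
  {F | F.IsSymm ∧ (∀ i j, 0 ≤ F i j) ∧ ∀ i, ∑ j, F i j = 1}

/-- Adjacency relation of the cycle on `m` vertices `0, 1, …, m-1` (edges `i ~ i+1 mod m`). -/
def cycleAdj (m : ℕ) (x y : Fin m) : Prop :=
  ((x : ℕ) + 1) % m = (y : ℕ) ∨ ((y : ℕ) + 1) % m = (x : ℕ)

instance (m : ℕ) (x y : Fin m) : Decidable (cycleAdj m x y) := by
  unfold cycleAdj; infer_instance

/-- A square matrix `M` of size `s` is one of Katz's three block types: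
(i) the `1 × 1` matrix `[1]`; (ii) the `2 × 2` matrix `[[0,1],[1,0]]`;
(iii) `(1/2) A(C_s)` for an odd cycle `C_s` with `s = 2j-1 ≥ 3`. -/
def IsKatzBlock (s : ℕ) (M : Fin s → Fin s → ℝ) : Prop :=
  (s = 1 ∧ ∀ x y, M x y = 1) ∨
  (s = 2 ∧ ∀ x y, M x y = if x = y then 0 else 1) ∨
  (3 ≤ s ∧ Odd s ∧ ∀ x y, M x y = if cycleAdj s x y then 1 / 2 else 0)

/-!
A point `F` of the polytope is extreme exactly when it is *rigid*: no nonzero symmetric matrix `E`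
with zero row sums is supported on the support of `F` (otherwise `F ± εE` stays in the polytope).

Katz blocks are rigid: along a cycle the weights of such an `E` on consecutive edges alternate in
sign, which is impossible around an odd cycle. Rigidity passes to block diagonal matrices.

Conversely let `F` be rigid. An entry equal to `1` spans a block `[1]` or `[[0,1],[1,0]]`. If no
entry equals `1`, every row has at least two nonzero entries, while rigidity makes the row-sum map
injective on symmetric matrices with the support of `F`, so there are at most `n` unordered support
pairs. Counting then forces a zero diagonal and exactly two nonzero entries per row: the support
graph is `2`-regular, so it contains a cycle, which is a closed block. The cycle is odd, since an
even cycle carries an alternating perturbation, and its weights, alternating about `1/2`, all equal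
`1/2`. Removing the block and inducting gives the decomposition.
-/

open Finset Function Matrix

section Rigidity

variable {ι κ : Type*} [Fintype ι] [Fintype κ]

def symmStochastic (ι : Type*) [Fintype ι] : Set (Matrix ι ι ℝ) :=
  {F | F.IsSymm ∧ (∀ i j, 0 ≤ F i j) ∧ ∀ i, ∑ j, F i j = 1}

def IsRigid (F : Matrix ι ι ℝ) : Prop :=
  ∀ E : Matrix ι ι ℝ, E.IsSymm → (∀ i j, F i j = 0 → E i j = 0) → (∀ i, ∑ j, E i j = 0) → E = 0

variable {F : Matrix ι ι ℝ}

theorem exists_add_smul_mem_symmStochastic (hF : F ∈ symmStochastic ι) {E : Matrix ι ι ℝ}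
    (hE : E.IsSymm) (hsupp : ∀ i j, F i j = 0 → E i j = 0) (hrow : ∀ i, ∑ j, E i j = 0) :
    ∃ ε : ℝ, 0 < ε ∧ F + ε • E ∈ symmStochastic ι ∧ F + (-ε) • E ∈ symmStochastic ι := by
  have hnonneg : ∀ᶠ t in nhds (0 : ℝ), ∀ i j, 0 ≤ F i j + t * E i j := by
    simp only [Filter.eventually_all]
    intro i j
    rcases (hF.2.1 i j).eq_or_lt with h | h
    · simp [← h, hsupp i j h.symm]
    · refine Filter.Tendsto.eventually_const_le h ?_
      exact (continuous_const.add (continuous_id.mul continuous_const)).tendsto' _ _ (by simp)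
  obtain ⟨δ, hδ, h⟩ := Metric.eventually_nhds_iff.1 hnonneg
  have hmem : ∀ t : ℝ, |t| < δ → F + t • E ∈ symmStochastic ι := fun t ht =>
    ⟨hF.1.add (hE.smul t), fun i j => h (by simpa [Real.dist_eq] using ht) i j,
      fun i => by simp [sum_add_distrib, ← mul_sum, hF.2.2, hrow]⟩
  refine ⟨δ / 2, half_pos hδ, hmem _ ?_, hmem _ ?_⟩ <;>
    simp only [abs_neg, abs_of_pos (half_pos hδ)] <;> linarith

theorem IsRigid.eq_of_support_subset (hR : IsRigid F) (hF : F ∈ symmStochastic ι)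
    {A : Matrix ι ι ℝ} (hA : A ∈ symmStochastic ι) (hsupp : ∀ i j, F i j = 0 → A i j = 0) :
    A = F :=
  sub_eq_zero.1 <| hR (A - F) (hA.1.sub hF.1) (fun i j h => by simp [h, hsupp i j h])
    (fun i => by simp [sum_sub_distrib, hA.2.2, hF.2.2])

theorem mem_extremePoints_symmStochastic_iff (hF : F ∈ symmStochastic ι) :
    F ∈ (symmStochastic ι).extremePoints ℝ ↔ IsRigid F := by
  rw [mem_extremePoints_iff_left]
  refine ⟨fun ⟨_, hext⟩ E hE hsupp hrow => ?_, fun hR => ⟨hF, fun A hA B hB hFAB => ?_⟩⟩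
  · obtain ⟨ε, hε, hmem⟩ := exists_add_smul_mem_symmStochastic hF hE hsupp hrow
    have hseg : F ∈ openSegment ℝ (F + ε • E) (F + (-ε) • E) :=
      ⟨1 / 2, 1 / 2, by norm_num, by norm_num, by norm_num, by module⟩
    simpa [hε.ne'] using sub_eq_zero.2 (hext _ hmem.1 _ hmem.2 hseg)
  · obtain ⟨a, b, ha, hb, -, rfl⟩ := hFAB
    refine hR.eq_of_support_subset hF hA fun i j h => ?_
    have hAij : 0 ≤ a * A i j := mul_nonneg ha.le (hA.2.1 i j)
    have hBij : 0 ≤ b * B i j := mul_nonneg hb.le (hB.2.1 i j)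
    simp only [Matrix.add_apply, Matrix.smul_apply, smul_eq_mul] at h
    simpa [ha.ne'] using (add_eq_zero_iff_of_nonneg hAij hBij).1 h |>.1

theorem IsRigid.submatrix (hR : IsRigid F) {f : κ → ι} (hf : Injective f) :
    IsRigid (F.submatrix f f) := by
  classical
  intro E hE hsupp hrow
  let E' : Matrix ι ι ℝ := fun i j => ∑ x, ∑ y, if f x = i ∧ f y = j then E x y else 0
  have hE' : ∀ x y, E' (f x) (f y) = E x y := by simp [E', hf.eq_iff, ite_and]
  have hzero : E' = 0 := by
    refine hR E' (IsSymm.ext fun i j => ?_) (fun i j hij => sum_eq_zero fun x _ => sum_eq_zero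
      fun y _ => ?_) (fun i => ?_)
    · simp only [E']
      rw [sum_comm]
      simp only [and_comm, hE.apply]
    · split_ifs with h
      · exact hsupp x y (by simpa [h.1, h.2] using hij)
      · rfl
    · calc ∑ j, E' i j = ∑ x, ∑ y, ∑ j, if f x = i ∧ f y = j then E x y else 0 := by
            simp only [E']
            rw [sum_comm]
            exact sum_congr rfl fun x _ => sum_comm
        _ = 0 := by
            simp only [ite_and, sum_ite_irrel, sum_ite_eq, mem_univ, if_true, hrow, ite_self,
              sum_const_zero]
  ext x y
  rw [← hE', hzero]
  rfl

theorem isRigid_blockDiagonal' {β : Type*} [Fintype β] [DecidableEq β] {n : β → Type*}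
    [∀ b, Fintype (n b)] {M : ∀ b, Matrix (n b) (n b) ℝ} (hM : ∀ b, IsRigid (M b)) :
    IsRigid (blockDiagonal' M) := by
  intro E hE hsupp hrow
  have hoff : ∀ a b x y, a ≠ b → E ⟨a, x⟩ ⟨b, y⟩ = 0 := fun a b x y hab =>
    hsupp _ _ (blockDiagonal'_apply_ne M x y hab)
  have hdiag : ∀ b, (fun x y => E ⟨b, x⟩ ⟨b, y⟩ : Matrix (n b) (n b) ℝ) = 0 := by
    intro b
    refine hM b _ (IsSymm.ext fun x y => hE.apply _ _) (fun x y h => hsupp _ _ ?_) (fun x => ?_)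
    · rwa [blockDiagonal'_apply_eq]
    · rw [← hrow ⟨b, x⟩, Fintype.sum_sigma, Fintype.sum_eq_single b]
      exact fun a hab => sum_eq_zero fun y _ => hoff b a x y (Ne.symm hab)
  ext ⟨a, x⟩ ⟨b, y⟩
  by_cases hab : a = b
  · subst hab
    exact congrFun (congrFun (hdiag a) x) y
  · exact hoff a b x y hab

end Rigidity

namespace Fin

variable {m : ℕ} [NeZero m]

theorem one_add_one_ne_zero (hm : 3 ≤ m) : (1 + 1 : Fin m) ≠ 0 := by
  simp [Fin.ext_iff, Fin.val_add, Nat.mod_eq_of_lt (by omega : 1 < m),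
    Nat.mod_eq_of_lt (by omega : 2 < m)]

theorem add_one_ne_sub_one (hm : 3 ≤ m) (x : Fin m) : x + 1 ≠ x - 1 := fun h =>
  one_add_one_ne_zero hm <| calc
    (1 + 1 : Fin m) = (x + 1) - (x - 1) := by abel
    _ = 0 := by rw [h, sub_self]

theorem neg_one_pow_val_add_one (hm : Even m) (x : Fin m) :
    (-1 : ℝ) ^ ((x + 1 : Fin m) : ℕ) = -(-1) ^ (x : ℕ) := by
  obtain ⟨k, rfl⟩ := Nat.exists_eq_succ_of_ne_zero (NeZero.ne m)
  rw [Fin.val_add_one]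
  split_ifs with h
  · have : Odd (x : ℕ) := by
      rw [h, Fin.val_last]
      exact Nat.not_even_iff_odd.1 (Nat.even_add_one.1 hm)
    rw [pow_zero, this.neg_one_pow, neg_neg]
  · rw [pow_succ, mul_neg_one]

open Fin.NatCast in
theorem eq_zero_of_add_one_eq_neg (hm : Odd m) {u : Fin m → ℝ} (hu : ∀ x, u (x + 1) = -u x) :
    u = 0 := by
  have hpow : ∀ k : ℕ, u k = (-1) ^ k * u 0 := by
    intro k
    induction k with
    | zero => simp
    | succ k ih => rw [Nat.cast_succ, hu, ih, pow_succ]; ring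
  have h0 : u 0 = 0 := by
    have := hpow m
    rw [Fin.natCast_self, hm.neg_one_pow] at this
    linarith
  funext x
  rw [← Fin.cast_val_eq_self x, hpow, h0, mul_zero, Pi.zero_apply]

end Fin

section Cycle

variable {m : ℕ} [NeZero m]

theorem cycleAdj_iff (x y : Fin m) : cycleAdj m x y ↔ y = x + 1 ∨ y = x - 1 := by
  have hval : ∀ z : Fin m, ((z + 1 : Fin m) : ℕ) = ((z : ℕ) + 1) % m := fun z => by
    rw [Fin.val_add, Fin.val_one', Nat.add_mod_mod]
  rw [cycleAdj, eq_sub_iff_add_eq, Fin.ext_iff, Fin.ext_iff, hval, hval, eq_comm (a := (y : ℕ))]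

theorem sum_eq_add_of_cycle_support (hm : 3 ≤ m) {u : Fin m → ℝ} {x : Fin m}
    (hu : ∀ y, u y ≠ 0 → y = x + 1 ∨ y = x - 1) : ∑ y, u y = u (x + 1) + u (x - 1) := by
  rw [← sum_pair (Fin.add_one_ne_sub_one hm x)]
  refine (sum_subset (subset_univ _) fun y _ hy => ?_).symm
  by_contra h
  exact hy (by simpa using hu y h)

theorem not_isRigid_of_even_cycle (hm : 3 ≤ m) (heven : Even m) {M : Matrix (Fin m) (Fin m) ℝ}
    (hM : M.IsSymm) (hadj : ∀ x, M x (x + 1) ≠ 0) : ¬IsRigid M := by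
  intro hR
  let s : Fin m → ℝ := fun x => (-1) ^ (x : ℕ)
  let E : Matrix (Fin m) (Fin m) ℝ := fun x y =>
    (if y = x + 1 then s x else 0) + (if x = y + 1 then s y else 0)
  have hE : E = 0 := by
    refine hR E (IsSymm.ext fun x y => add_comm _ _) (fun x y hxy => ?_) (fun x => ?_)
    · have h1 : y ≠ x + 1 := by rintro rfl; exact hadj x hxy
      have h2 : x ≠ y + 1 := by rintro rfl; exact hadj y (by rwa [← hM.apply])
      simp [E, h1, h2]
    · have hprev : ∑ y, (if x = y + 1 then s y else 0) = s (x - 1) := by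
        simp_rw [eq_comm (a := x), ← eq_sub_iff_add_eq, sum_ite_eq', mem_univ, if_true]
      have hsign := Fin.neg_one_pow_val_add_one heven (x - 1)
      rw [sub_add_cancel] at hsign
      simp [E, sum_add_distrib, hprev, s, hsign]
  have h01 : E 0 1 = 1 := by simp [E, s, (Fin.one_add_one_ne_zero hm).symm]
  simp [hE] at h01

theorem isRigid_of_odd_cycle (hm : 3 ≤ m) (hodd : Odd m) {M : Matrix (Fin m) (Fin m) ℝ}
    (hM : ∀ x y, M x y ≠ 0 → y = x + 1 ∨ y = x - 1) : IsRigid M := by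
  intro E hE hsupp hrow
  have hEsupp : ∀ x y, E x y ≠ 0 → y = x + 1 ∨ y = x - 1 := fun x y h =>
    hM x y (mt (hsupp x y) h)
  have hu : (fun x => E x (x + 1)) = 0 := Fin.eq_zero_of_add_one_eq_neg hodd fun x => by
    have := hrow (x + 1)
    rw [sum_eq_add_of_cycle_support hm (hEsupp (x + 1)), add_sub_cancel_right, hE.apply x] at this
    linarith
  ext x y
  by_contra h
  rcases hEsupp x y h with rfl | rfl
  · exact h (congrFun hu x)
  · have := congrFun hu (x - 1)
    rw [sub_add_cancel] at this
    exact h (by rw [← hE.apply]; exact this)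

theorem cycle_weights_eq_half (hm : 3 ≤ m) (hodd : Odd m) {M : Matrix (Fin m) (Fin m) ℝ}
    (hM : M ∈ symmStochastic (Fin m)) (hsupp : ∀ x y, M x y ≠ 0 → y = x + 1 ∨ y = x - 1)
    (x : Fin m) : M x (x + 1) = 1 / 2 := by
  have hu : (fun x => M x (x + 1) - 1 / 2) = 0 := Fin.eq_zero_of_add_one_eq_neg hodd fun x => by
    have := hM.2.2 (x + 1)
    rw [sum_eq_add_of_cycle_support hm (hsupp (x + 1)), add_sub_cancel_right, hM.1.apply x] at this
    linarith
  linarith [show M x (x + 1) - 1 / 2 = 0 from congrFun hu x]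

theorem isKatzBlock_of_cycle (hm : 3 ≤ m) {M : Matrix (Fin m) (Fin m) ℝ}
    (hM : M ∈ symmStochastic (Fin m)) (hR : IsRigid M)
    (hsupp : ∀ x y, M x y ≠ 0 → y = x + 1 ∨ y = x - 1) (hadj : ∀ x, M x (x + 1) ≠ 0) :
    IsKatzBlock m M := by
  have hodd : Odd m :=
    Nat.not_even_iff_odd.1 fun heven => not_isRigid_of_even_cycle hm heven hM.1 hadj hR
  refine Or.inr (Or.inr ⟨hm, hodd, fun x y => ?_⟩)
  have hhalf := cycle_weights_eq_half hm hodd hM hsupp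
  split_ifs with hxy
  · rcases (cycleAdj_iff x y).1 hxy with rfl | rfl
    · exact hhalf x
    · rw [← hM.1.apply, ← hhalf (x - 1), sub_add_cancel]
  · by_contra h
    exact hxy ((cycleAdj_iff x y).2 (hsupp x y h))

end Cycle

theorem IsKatzBlock.isRigid {s : ℕ} {M : Matrix (Fin s) (Fin s) ℝ} (h : IsKatzBlock s M) :
    IsRigid M := by
  rcases h with ⟨rfl, -⟩ | ⟨rfl, hM⟩ | ⟨hs, hodd, hM⟩
  · intro E _ _ hrow
    ext x y
    fin_cases x; fin_cases y
    simpa using hrow 0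
  · intro E hE hsupp hrow
    have hdiag : ∀ x, E x x = 0 := fun x => hsupp x x (by simp [hM])
    have h01 : E 0 1 = 0 := by simpa [hdiag] using hrow 0
    have h10 : E 1 0 = 0 := (hE.apply 0 1).trans h01
    ext x y
    fin_cases x <;> fin_cases y <;> simp [hdiag, h01, h10]
  · have : NeZero s := ⟨by omega⟩
    refine isRigid_of_odd_cycle hs hodd fun x y hxy => (cycleAdj_iff x y).1 ?_
    by_contra h
    simp [hM, h] at hxy

theorem SimpleGraph.exists_cycle_embedding_of_degree_eq_two {V : Type*} [Fintype V] [Nonempty V]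
    (G : SimpleGraph V) [DecidableRel G.Adj] (h : ∀ v, G.degree v = 2) :
    ∃ (k : ℕ) (g : Fin (k + 3) ↪ V), ∀ x, G.Adj (g x) (g (x + 1)) := by
  have hcyc : G.IsCycles := fun v _ => by
    rw [Set.ncard_eq_toFinset_card', ← neighborFinset_def, card_neighborFinset_eq_degree, h]
  let v := Classical.arbitrary V
  obtain ⟨p, hp, -⟩ := hcyc.exists_cycle_toSubgraph_verts_eq_connectedComponentSupp
    (c := G.connectedComponentMk v) rfl (degree_pos_iff_nonempty.1 (by rw [h]; norm_num))
  obtain ⟨k, hk⟩ : ∃ k, p.length = k + 3 := ⟨p.length - 3, by have := hp.three_le_length; omega⟩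
  obtain ⟨c⟩ := (cycleGraph_isContained_iff (by omega : 2 < k + 3)).2 ⟨v, p, hp, hk⟩
  exact ⟨k, c.toEmbedding, fun x => c.toHom.map_adj (cycleGraph_adj'.2 (Or.inr (by simp)))⟩

section Counting

variable {ι κ : Type*} [Fintype ι] [Fintype κ] {F : Matrix ι ι ℝ}

theorem IsRigid.card_le_of_injective_sym2 (hR : IsRigid F) {φ : κ → Sym2 ι} (hφ : Injective φ)
    (hsupp : ∀ k i j, φ k = s(i, j) → F i j ≠ 0) : Fintype.card κ ≤ Fintype.card ι := by
  let rowSums : (Sym2 ι → ℝ) →ₗ[ℝ] ι → ℝ := LinearMap.pi fun i => ∑ j, LinearMap.proj s(i, j)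
  let Ψ := rowSums ∘ₗ ExtendByZero.linearMap ℝ φ
  have hΨ : Injective Ψ := by
    refine (injective_iff_map_eq_zero Ψ).2 fun w hw => ?_
    let E : Matrix ι ι ℝ := fun i j => extend φ w 0 s(i, j)
    have hE : E = 0 := by
      refine hR E (IsSymm.ext fun i j => by simp only [E, Sym2.eq_swap]) (fun i j hij => ?_)
        (fun i => by simpa [Ψ, rowSums] using congrFun hw i)
      exact extend_apply' _ _ _ fun ⟨k, hk⟩ => hsupp k i j hk hij
    funext k
    obtain ⟨⟨i, j⟩, hij⟩ := Sym2.mk_surjective (φ k)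
    rw [← hφ.extend_apply w 0 k, ← hij]
    exact congrFun (congrFun hE i) j
  simpa using LinearMap.finrank_le_finrank_of_injective hΨ

theorem two_le_card_support_row {i : ι} (hrow : ∑ j, F i j = 1) (hne : ∀ j, F i j ≠ 1) :
    2 ≤ #{j | F i j ≠ 0} := by
  have : Nonempty ι := ⟨i⟩
  by_contra! h
  obtain ⟨a, ha⟩ := card_le_one_iff_subset_singleton.1 (Nat.le_of_lt_succ h)
  apply hne a
  calc F i a = ∑ j ∈ {a}, F i j := (sum_singleton _ a).symm
    _ = ∑ j with F i j ≠ 0, F i j := (sum_subset ha fun j _ hj => by simpa using hj).symm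
    _ = 1 := by rw [sum_filter_ne_zero, hrow]

/-- The left-hand side is twice the number of unordered pairs `{i, j}` with `F i j ≠ 0`. -/
theorem IsRigid.sum_card_support_add_card_diag_le (hF : F.IsSymm) (hR : IsRigid F) :
    ∑ i, #{j | F i j ≠ 0} + #{i | F i i ≠ 0} ≤ 2 * Fintype.card ι := by
  classical
  let G := SimpleGraph.fromRel fun i j => F i j ≠ 0
  have hadj : ∀ i j, G.Adj i j ↔ i ≠ j ∧ F i j ≠ 0 := by simp [G, hF.apply]
  have hdeg : ∀ i, #{j | F i j ≠ 0} = G.degree i + if F i i ≠ 0 then 1 else 0 := by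
    intro i
    have : G.neighborFinset i = ({j | F i j ≠ 0} : Finset ι).erase i := by
      ext j
      simp [hadj, eq_comm]
    rw [← G.card_neighborFinset_eq_degree, this]
    split_ifs with hii
    · rw [card_erase_add_one (by simpa using hii)]
    · rw [erase_eq_of_notMem (by simpa using hii), add_zero]
  have hcard : #G.edgeFinset + #{i | F i i ≠ 0} ≤ Fintype.card ι := by
    have := hR.card_le_of_injective_sym2
      (φ := Sum.elim ((↑) : G.edgeSet → Sym2 ι) fun i : {i // F i i ≠ 0} => s(i.1, i.1)) ?_ ?_
    · rwa [Fintype.card_sum, G.card_edgeSet, Fintype.card_subtype] at this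
    · refine Subtype.val_injective.sumElim (fun a b hab => ?_) fun e a hea => ?_
      · simpa [Subtype.ext_iff] using hab
      · exact G.not_isDiag_of_mem_edgeSet e.2 (by rw [hea]; exact Sym2.mk_isDiag_iff.2 rfl)
    · rintro (⟨e, he⟩ | ⟨a, ha⟩) i j hij
      · simp only [Sum.elim_inl] at hij
        subst hij
        exact ((hadj i j).1 he).2
      · obtain ⟨rfl, rfl⟩ | ⟨rfl, rfl⟩ := Sym2.eq_iff.1 hij <;> exact ha
  rw [sum_congr rfl fun i _ => hdeg i, sum_add_distrib, G.sum_degrees_eq_twice_card_edges]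
  simp only [sum_boole, Nat.cast_id]
  omega

theorem IsRigid.diag_eq_zero_and_card_support_eq_two (hF : F ∈ symmStochastic ι) (hR : IsRigid F)
    (hne : ∀ i j, F i j ≠ 1) (i : ι) : F i i = 0 ∧ #{j | F i j ≠ 0} = 2 := by
  have hle := hR.sum_card_support_add_card_diag_le hF.1
  have hlow : ∀ i, 2 ≤ #{j | F i j ≠ 0} := fun i => two_le_card_support_row (hF.2.2 i) (hne i)
  have hsum : ∑ _i : ι, 2 ≤ ∑ i, #{j | F i j ≠ 0} := sum_le_sum fun i _ => hlow i
  simp only [sum_const, card_univ, smul_eq_mul] at hsum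
  have hdiag : #{i | F i i ≠ 0} = 0 := by omega
  have hrow : ∑ _i : ι, 2 = ∑ i, #{j | F i j ≠ 0} := by
    simp only [sum_const, card_univ, smul_eq_mul]
    omega
  refine ⟨?_, ((sum_eq_sum_iff_of_le fun i _ => hlow i).1 hrow i (mem_univ i)).symm⟩
  simpa using (card_eq_zero.1 hdiag ▸ mem_filter.2 ⟨mem_univ i, ·⟩ : F i i ≠ 0 → i ∈ (∅ : Finset ι))

end Counting

section Components

variable {ι κ : Type*} [Fintype ι] [Fintype κ] {F : Matrix ι ι ℝ}

def IsKatzComponent (F : Matrix ι ι ℝ) {s : ℕ} (g : Fin s ↪ ι) : Prop :=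
  (∀ x j, j ∉ Set.range g → F (g x) j = 0) ∧ IsKatzBlock s fun x y => F (g x) (g y)

theorem submatrix_mem_symmStochastic (hF : F ∈ symmStochastic ι) {f : κ → ι} (hf : Injective f)
    (hclosed : ∀ x j, j ∉ Set.range f → F (f x) j = 0) :
    F.submatrix f f ∈ symmStochastic κ :=
  ⟨hF.1.submatrix f, fun _ _ => hF.2.1 _ _, fun x => by
    rw [← hF.2.2 (f x)]
    exact Fintype.sum_of_injective f hf _ _ (hclosed x) fun _ => rfl⟩

theorem eq_zero_of_eq_one (hF : F ∈ symmStochastic ι) {i j k : ι} (hk : F i k = 1) (hj : j ≠ k) :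
    F i j = 0 := by
  classical
  have hrow := hF.2.2 i
  rw [← add_sum_erase _ _ (mem_univ k), hk, add_eq_left,
    sum_eq_zero_iff_of_nonneg fun j _ => hF.2.1 i j] at hrow
  exact hrow j (mem_erase.2 ⟨hj, mem_univ j⟩)

theorem exists_isKatzComponent_of_diag_eq_one (hF : F ∈ symmStochastic ι) {i : ι}
    (hi : F i i = 1) : ∃ (s : ℕ) (g : Fin s ↪ ι), IsKatzComponent F g :=
  ⟨1, ⟨fun _ => i, fun _ _ _ => Subsingleton.elim _ _⟩,
    fun _ _ hj => eq_zero_of_eq_one hF hi fun h => hj ⟨0, h.symm⟩, Or.inl ⟨rfl, fun _ _ => hi⟩⟩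

theorem exists_isKatzComponent_of_eq_one (hF : F ∈ symmStochastic ι) {i j : ι} (hij : i ≠ j)
    (h : F i j = 1) : ∃ (s : ℕ) (g : Fin s ↪ ι), IsKatzComponent F g := by
  have h' : F j i = 1 := by rwa [hF.1.apply]
  refine ⟨2, ⟨![i, j], fun x y hxy => ?_⟩, fun x k hk => ?_, Or.inr (Or.inl ⟨rfl, fun x y => ?_⟩)⟩
  · fin_cases x <;> fin_cases y <;> simp_all [eq_comm]
  · have hki : k ≠ i := fun hki => hk ⟨0, hki.symm⟩
    have hkj : k ≠ j := fun hkj => hk ⟨1, hkj.symm⟩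
    fin_cases x
    · exact eq_zero_of_eq_one hF h hkj
    · exact eq_zero_of_eq_one hF h' hki
  · fin_cases x <;> fin_cases y
    · exact eq_zero_of_eq_one hF h hij
    · exact h
    · exact h'
    · exact eq_zero_of_eq_one hF h' hij.symm

theorem exists_isKatzComponent_of_ne_one [Nonempty ι] (hF : F ∈ symmStochastic ι)
    (hR : IsRigid F) (hne : ∀ i j, F i j ≠ 1) : ∃ (s : ℕ) (g : Fin s ↪ ι), IsKatzComponent F g := by
  classical
  have hdeg := hR.diag_eq_zero_and_card_support_eq_two hF hne
  let G := SimpleGraph.fromRel fun i j => F i j ≠ 0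
  have hN : ∀ i, G.neighborFinset i = ({j | F i j ≠ 0} : Finset ι) := fun i => by
    ext j
    simp only [SimpleGraph.mem_neighborFinset, G, SimpleGraph.fromRel_adj, hF.1.apply i j, or_self,
      mem_filter, mem_univ, true_and, and_iff_right_iff_imp]
    rintro hij rfl
    exact hij (hdeg i).1
  obtain ⟨k, g, hg⟩ := G.exists_cycle_embedding_of_degree_eq_two fun i => by
    rw [← G.card_neighborFinset_eq_degree, hN, (hdeg i).2]
  have hadj : ∀ x, F (g x) (g (x + 1)) ≠ 0 := fun x => by
    have := (G.mem_neighborFinset _ _).2 (hg x)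
    rw [hN] at this
    simpa using this
  have hnbr : ∀ x, ({j | F (g x) j ≠ 0} : Finset ι) = {g (x + 1), g (x - 1)} := fun x => by
    refine (eq_of_subset_of_card_le (fun j hj => ?_) ?_).symm
    · rcases mem_insert.1 hj with rfl | hj
      · simpa using hadj x
      · rw [mem_singleton.1 hj]
        simpa [hF.1.apply] using hadj (x - 1)
    · rw [(hdeg _).2, card_pair (g.injective.ne (Fin.add_one_ne_sub_one (by omega) x))]
  have hsupp : ∀ x j, F (g x) j ≠ 0 → j = g (x + 1) ∨ j = g (x - 1) := fun x j hj => by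
    simpa [hnbr] using (mem_filter.2 ⟨mem_univ j, hj⟩ : j ∈ ({j | F (g x) j ≠ 0} : Finset ι))
  have hclosed : ∀ x j, j ∉ Set.range g → F (g x) j = 0 := fun x j hj => by
    by_contra h
    rcases hsupp x j h with rfl | rfl <;> exact hj ⟨_, rfl⟩
  refine ⟨k + 3, g, hclosed, isKatzBlock_of_cycle (by omega)
    (submatrix_mem_symmStochastic hF g.injective hclosed) (hR.submatrix g.injective)
    (fun x y hxy => ?_) hadj⟩
  rcases hsupp x (g y) hxy with h | h <;> [left; right] <;> exact g.injective h

theorem IsRigid.exists_isKatzComponent [Nonempty ι] (hF : F ∈ symmStochastic ι) (hR : IsRigid F) :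
    ∃ (s : ℕ) (g : Fin s ↪ ι), IsKatzComponent F g := by
  by_cases hone : ∃ i j, F i j = 1
  · obtain ⟨i, j, h⟩ := hone
    obtain rfl | hij := eq_or_ne i j
    · exact exists_isKatzComponent_of_diag_eq_one hF h
    · exact exists_isKatzComponent_of_eq_one hF hij h
  · simp only [not_exists] at hone
    exact exists_isKatzComponent_of_ne_one hF hR hone

end Components

def finConsSigmaEquiv {m : ℕ} (s : ℕ) (sizes : Fin m → ℕ) :
    Fin s ⊕ (Σ b : Fin m, Fin (sizes b)) ≃
      Σ b : Fin (m + 1), Fin ((Fin.cons s sizes : Fin (m + 1) → ℕ) b) where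
  toFun := Sum.elim (fun x => ⟨0, x⟩) fun p => ⟨p.1.succ, p.2⟩
  invFun p := Fin.cases (motive := fun b => Fin ((Fin.cons s sizes : Fin (m + 1) → ℕ) b) → _)
    Sum.inl (fun b y => Sum.inr ⟨b, y⟩) p.1 p.2
  left_inv x := by rcases x with x | ⟨b, y⟩ <;> rfl
  right_inv := by
    rintro ⟨b, y⟩
    induction b using Fin.cases <;> rfl

section Decomposition

variable {ι : Type*} {F : Matrix ι ι ℝ}

def HasKatzDecomposition (F : Matrix ι ι ℝ) : Prop :=
  ∃ (m : ℕ) (sizes : Fin m → ℕ) (e : ι ≃ Σ b : Fin m, Fin (sizes b)),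
    (∀ i j, (e i).1 ≠ (e j).1 → F i j = 0) ∧
    ∀ b, IsKatzBlock (sizes b) fun x y => F (e.symm ⟨b, x⟩) (e.symm ⟨b, y⟩)

theorem HasKatzDecomposition.isRigid [Fintype ι] (h : HasKatzDecomposition F) : IsRigid F := by
  obtain ⟨m, sizes, e, hcross, hblocks⟩ := h
  let M : ∀ b, Matrix (Fin (sizes b)) (Fin (sizes b)) ℝ := fun b =>
    F.submatrix (fun x => e.symm ⟨b, x⟩) fun y => e.symm ⟨b, y⟩
  have hblock : F.submatrix e.symm e.symm = blockDiagonal' M := by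
    ext ⟨a, x⟩ ⟨b, y⟩
    by_cases hab : a = b
    · subst hab
      rw [blockDiagonal'_apply_eq]
      rfl
    · rw [blockDiagonal'_apply_ne _ _ _ hab]
      exact hcross _ _ (by simpa using hab)
  have := (isRigid_blockDiagonal' (M := M) fun b => (hblocks b).isRigid).submatrix e.injective
  rwa [← hblock, submatrix_submatrix, e.symm_comp_self, submatrix_id_id] at this

theorem HasKatzDecomposition.of_isKatzComponent (hF : F.IsSymm) {s : ℕ} {g : Fin s ↪ ι}
    (hg : IsKatzComponent F g)
    (hrest : HasKatzDecomposition (F.submatrix ((↑) : {i // i ∉ Set.range g} → ι) (↑))) :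
    HasKatzDecomposition F := by
  classical
  obtain ⟨m, sizes, e, hcross, hblocks⟩ := hrest
  let E : (Σ b : Fin (m + 1), Fin ((Fin.cons s sizes : Fin (m + 1) → ℕ) b)) ≃ ι :=
    (finConsSigmaEquiv s sizes).symm.trans
      ((Equiv.sumCongr (Equiv.ofInjective g g.injective) e.symm).trans (Equiv.sumCompl _))
  refine ⟨m + 1, Fin.cons s sizes, E.symm, fun i j hij => ?_, fun b => ?_⟩
  · suffices ∀ p q : Σ b : Fin (m + 1), Fin ((Fin.cons s sizes : Fin (m + 1) → ℕ) b),
        p.1 ≠ q.1 → F (E p) (E q) = 0 by simpa using this (E.symm i) (E.symm j) hij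
    rintro ⟨a, x⟩ ⟨b, y⟩ hab
    induction a using Fin.cases <;> induction b using Fin.cases
    · exact absurd rfl hab
    · exact hg.1 x _ (e.symm _).2
    · exact (hF.apply _ _).trans (hg.1 y _ (e.symm _).2)
    · exact hcross (e.symm ⟨_, x⟩) (e.symm ⟨_, y⟩) (by simpa using hab)
  · induction b using Fin.cases
    · exact hg.2
    · exact hblocks _

theorem IsRigid.hasKatzDecomposition [Fintype ι] (hF : F ∈ symmStochastic ι) (hR : IsRigid F) :
    HasKatzDecomposition F := by
  classical
  induction hn : Fintype.card ι using Nat.strong_induction_on generalizing ι with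
  | _ n ih =>
  rcases isEmpty_or_nonempty ι with hι | hι
  · exact ⟨0, Fin.elim0, Equiv.equivOfIsEmpty _ _, fun i => isEmptyElim i, fun b => b.elim0⟩
  obtain ⟨s, g, hg⟩ := hR.exists_isKatzComponent hF
  have hs : 0 < s := by rcases hg.2 with ⟨rfl, -⟩ | ⟨rfl, -⟩ | ⟨h, -⟩ <;> omega
  have hrest : F.submatrix ((↑) : {i // i ∉ Set.range g} → ι) (↑) ∈ symmStochastic _ := by
    refine submatrix_mem_symmStochastic hF Subtype.val_injective fun i j hj => ?_
    obtain ⟨x, rfl⟩ : j ∈ Set.range g := by simpa using hj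
    exact (hF.1.apply _ _).symm.trans (hg.1 x _ i.2)
  refine .of_isKatzComponent hF.1 hg (ih _ ?_ hrest (hR.submatrix Subtype.val_injective) rfl)
  rw [← hn]
  exact Fintype.card_subtype_lt (x := g ⟨0, hs⟩) (by simp)

end Decomposition

/-- Katz's theorem: a symmetric doubly stochastic matrix `F` is an extreme point of the
polytope of symmetric doubly stochastic matrices if and only if, after a simultaneous
permutation of rows and columns, `F` is block diagonal with blocks `[1]`,
`[[0,1],[1,0]]`, or `(1/2)A(C_{2j-1})` for odd cycles of length `2j-1 ≥ 3`. -/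
theorem katz_extreme_points (n : ℕ) (F : Matrix (Fin n) (Fin n) ℝ) (hF : F ∈ symDS n) :
    F ∈ Set.extremePoints ℝ (symDS n) ↔
      ∃ (m : ℕ) (sizes : Fin m → ℕ) (e : Fin n ≃ (Σ b : Fin m, Fin (sizes b))),
        (∀ i j : Fin n, (e i).1 ≠ (e j).1 → F i j = 0) ∧
        ∀ b : Fin m,
          IsKatzBlock (sizes b) (fun x y => F (e.symm ⟨b, x⟩) (e.symm ⟨b, y⟩)) :=
  (mem_extremePoints_symmStochastic_iff hF).trans
    ⟨fun hR => hR.hasKatzDecomposition hF, HasKatzDecomposition.isRigid⟩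
end

section
/- For a doubly stochastic n×n matrix A and 1 ≤ k ≤ n, the capacity of the polynomial p_{k,A}(x) = Σ_{1≤i_1<...<i_k≤n} ∏_{j=1}^k (Ax)_{i_j} equals C(n,k), where the capacity is the infimum of p over positive vectors x with ∏ x_i = 1. -/
open Finset

/-- The polynomial map `p_{k,A}(x) = ∑_{1 ≤ i₁ < … < i_k ≤ n} ∏_{j=1}^k (Ax)_{i_j}`. -/
noncomputable def pkA {n : ℕ} (A : Matrix (Fin n) (Fin n) ℝ) (k : ℕ) (x : Fin n → ℝ) : ℝ :=
  ∑ s ∈ (Finset.univ : Finset (Fin n)).powersetCard k, ∏ i ∈ s, A.mulVec x i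

/-- The capacity of `f : ℝⁿ → ℝ`: the infimum of `f(x)` over positive vectors `x`
with `∏ xᵢ = 1`. -/
noncomputable def capacity {n : ℕ} (f : (Fin n → ℝ) → ℝ) : ℝ :=
  sInf {y | ∃ x : Fin n → ℝ, (∀ i, 0 < x i) ∧ (∏ i, x i) = 1 ∧ f x = y}

lemma count_mem_powersetCard (n k : ℕ) (hk : 1 ≤ k) (i : Fin n) :
    ((Finset.univ.powersetCard k).filter (fun s => i ∈ s)).card = Nat.choose (n-1) (k-1) := by
  have : ((Finset.univ.powersetCard k).filter (fun s => i ∈ s)).card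
      = ((Finset.univ.erase i).powersetCard (k-1)).card := by
    apply Finset.card_bij (fun s _ => s.erase i)
    · intro s hs
      simp only [mem_filter, mem_powersetCard] at hs
      simp only [mem_powersetCard]
      refine ⟨fun x hx => ?_, ?_⟩
      · exact Finset.mem_erase.2 ⟨(Finset.mem_erase.1 hx).1, Finset.mem_univ _⟩
      · rw [Finset.card_erase_of_mem hs.2, hs.1.2]
    · intro s hs t ht h
      simp only [mem_filter] at hs ht
      rw [← Finset.insert_erase hs.2, ← Finset.insert_erase ht.2, h]
    · intro t ht
      simp only [mem_powersetCard] at ht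
      have hit : i ∉ t := fun h => (Finset.mem_erase.1 (ht.1 h)).1 rfl
      refine ⟨insert i t, ?_, Finset.erase_insert hit⟩
      simp only [mem_filter, mem_powersetCard]
      refine ⟨⟨Finset.subset_univ _, ?_⟩, Finset.mem_insert_self _ _⟩
      rw [Finset.card_insert_of_notMem hit, ht.2]
      omega
  rw [this, Finset.card_powersetCard, Finset.card_erase_of_mem (Finset.mem_univ _),
    Finset.card_univ, Fintype.card_fin]

lemma prod_prod_powersetCard (n k : ℕ) (hk : 1 ≤ k) (y : Fin n → ℝ) :
    ∏ s ∈ (Finset.univ : Finset (Fin n)).powersetCard k, ∏ i ∈ s, y i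
      = ∏ i, y i ^ Nat.choose (n-1) (k-1) := by
  have h1 : ∀ s ∈ (Finset.univ : Finset (Fin n)).powersetCard k,
      ∏ i ∈ s, y i = ∏ i : Fin n, if i ∈ s then y i else 1 := by
    intro s hs
    rw [Finset.prod_ite_mem, Finset.univ_inter]
  rw [Finset.prod_congr rfl h1, Finset.prod_comm]
  refine Finset.prod_congr rfl fun i _ => ?_
  rw [Finset.prod_ite, Finset.prod_const, Finset.prod_const, one_pow, mul_one,
    count_mem_powersetCard n k hk i]

lemma pkA_lower (n k : ℕ) (hk : 1 ≤ k) (hkn : k ≤ n)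
    (A : Matrix (Fin n) (Fin n) ℝ) (hnn : ∀ i j, 0 ≤ A i j)
    (hrow : ∀ i, ∑ j, A i j = 1) (hcol : ∀ j, ∑ i, A i j = 1)
    (x : Fin n → ℝ) (hx : ∀ i, 0 < x i) (hx1 : (∏ i, x i) = 1) :
    (Nat.choose n k : ℝ) ≤ pkA A k x := by
  set y := A.mulVec x with hy
  have hyi : ∀ i, ∏ j, (x j) ^ (A i j) ≤ y i := by
    intro i
    have := Real.geom_mean_le_arith_mean_weighted Finset.univ (A i) x
      (fun j _ => hnn i j) (hrow i) (fun j _ => (hx j).le)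
    simpa [hy, Matrix.mulVec, dotProduct] using this
  have hpos : ∀ i, 0 < y i := fun i =>
    lt_of_lt_of_le (Finset.prod_pos fun j _ => Real.rpow_pos_of_pos (hx j) _) (hyi i)
  have hprod1 : (1 : ℝ) ≤ ∏ i, y i := by
    have h2 : ∏ i, ∏ j, (x j) ^ (A i j) ≤ ∏ i, y i :=
      Finset.prod_le_prod (fun i _ => Finset.prod_nonneg fun j _ =>
        (Real.rpow_pos_of_pos (hx j) _).le) (fun i _ => hyi i)
    have h3 : ∏ i, ∏ j, (x j) ^ (A i j) = ∏ j, x j ^ (∑ i, A i j) := by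
      rw [Finset.prod_comm]
      exact Finset.prod_congr rfl fun j _ => (Real.rpow_sum_of_pos (hx j) _ _).symm
    have h4 : ∏ j, x j ^ (∑ i, A i j) = 1 := by
      rw [Finset.prod_congr rfl fun j _ => by rw [hcol j, Real.rpow_one], hx1]
    calc (1:ℝ) = ∏ j, x j ^ (∑ i, A i j) := h4.symm
    _ = ∏ i, ∏ j, (x j) ^ (A i j) := h3.symm
    _ ≤ ∏ i, y i := h2
  set P := (Finset.univ : Finset (Fin n)).powersetCard k with hP
  have hN : P.card = Nat.choose n k := by
    rw [hP, Finset.card_powersetCard, Finset.card_univ, Fintype.card_fin]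
  have hNpos : (0:ℝ) < (Nat.choose n k : ℝ) := by
    exact_mod_cast Nat.choose_pos hkn
  have hamgm := Real.geom_mean_le_arith_mean_weighted P
    (fun _ => ((Nat.choose n k : ℝ))⁻¹) (fun s => ∏ i ∈ s, y i)
    (fun _ _ => by positivity)
    (by rw [Finset.sum_const, hN, nsmul_eq_mul, mul_inv_cancel₀ hNpos.ne'])
    (fun s _ => Finset.prod_nonneg fun i _ => (hpos i).le)
  have hgm : (1:ℝ) ≤ ∏ s ∈ P, (∏ i ∈ s, y i) ^ ((Nat.choose n k : ℝ))⁻¹ := by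
    rw [Real.finset_prod_rpow _ _ (fun s _ => Finset.prod_nonneg fun i _ => (hpos i).le),
      prod_prod_powersetCard n k hk y, Finset.prod_pow]
    exact Real.one_le_rpow (one_le_pow₀ hprod1) (by positivity)
  have hsum : pkA A k x = ∑ s ∈ P, ∏ i ∈ s, y i := rfl
  have : (1:ℝ) ≤ ∑ s ∈ P, ((Nat.choose n k : ℝ))⁻¹ * ∏ i ∈ s, y i := le_trans hgm hamgm
  rw [← Finset.mul_sum, ← hsum] at this
  calc (Nat.choose n k : ℝ) = (Nat.choose n k : ℝ) * 1 := (mul_one _).symm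
  _ ≤ (Nat.choose n k : ℝ) * (((Nat.choose n k : ℝ))⁻¹ * pkA A k x) := by
      exact mul_le_mul_of_nonneg_left this hNpos.le
  _ = pkA A k x := by field_simp

/-- For a doubly stochastic matrix `A` and `1 ≤ k ≤ n`, the capacity of `p_{k,A}`
equals `C(n,k)`. -/
theorem capacity_pkA_doublyStochastic (n k : ℕ) (hk : 1 ≤ k) (hkn : k ≤ n)
    (A : Matrix (Fin n) (Fin n) ℝ) (hnn : ∀ i j, 0 ≤ A i j)
    (hrow : ∀ i, ∑ j, A i j = 1) (hcol : ∀ j, ∑ i, A i j = 1) :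
    capacity (pkA A k) = (Nat.choose n k : ℝ) := by
  have hmem : pkA A k (fun _ => 1) = (Nat.choose n k : ℝ) := by
    have h1 : ∀ i, A.mulVec (fun _ => (1:ℝ)) i = 1 := by
      intro i
      simp [Matrix.mulVec, dotProduct, hrow i]
    unfold pkA
    rw [Finset.sum_congr rfl fun s _ => Finset.prod_congr rfl fun i _ => h1 i]
    simp [Finset.card_powersetCard]
  have hlb : ∀ z ∈ {y | ∃ x : Fin n → ℝ, (∀ i, 0 < x i) ∧ (∏ i, x i) = 1 ∧ pkA A k x = y},
      (Nat.choose n k : ℝ) ≤ z := by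
    rintro z ⟨x, hx, hx1, rfl⟩
    exact pkA_lower n k hk hkn A hnn hrow hcol x hx hx1
  have hne : (Nat.choose n k : ℝ) ∈
      {y | ∃ x : Fin n → ℝ, (∀ i, 0 < x i) ∧ (∏ i, x i) = 1 ∧ pkA A k x = y} :=
    ⟨fun _ => 1, fun _ => one_pos, by simp, hmem⟩
  exact le_antisymm (csInf_le ⟨_, hlb⟩ hne) (le_csInf ⟨_, hne⟩ hlb)
end

section
/- For A ∈ ℝ_+^{n×n} and 1 ≤ k ≤ n, the mixed partial derivative ∂^n/∂x_1⋯∂x_n of p(x) := (x_1+...+x_n)^{n-k} · p_{k,A}(x) evaluated at 0 equals (n-k)! · perm_k(A). -/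
open MvPolynomial

open Classical in
/-- `perm_k A`: the sum of the permanents of all `k × k` submatrices of `A`, written as a
sum over partial permutations (sets of `k` positions with distinct rows and columns). -/
noncomputable def permk {n : ℕ} (A : Matrix (Fin n) (Fin n) ℝ) (k : ℕ) : ℝ :=
  ∑ s ∈ Finset.univ.filter (fun s : Finset (Fin n × Fin n) =>
      s.card = k ∧ (s : Set (Fin n × Fin n)).InjOn Prod.fst ∧
        (s : Set (Fin n × Fin n)).InjOn Prod.snd),
    ∏ p ∈ s, A p.1 p.2

/-- The linear form `(Ax)_i` as a multivariate polynomial. -/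
noncomputable def rowPoly {n : ℕ} (A : Matrix (Fin n) (Fin n) ℝ) (i : Fin n) :
    MvPolynomial (Fin n) ℝ :=
  ∑ j, MvPolynomial.C (A i j) * MvPolynomial.X j

/-- The polynomial `p_{k,A} = ∑_{1 ≤ i₁ < … < i_k ≤ n} ∏_{j=1}^k (Ax)_{i_j}`. -/
noncomputable def pkPoly {n : ℕ} (A : Matrix (Fin n) (Fin n) ℝ) (k : ℕ) :
    MvPolynomial (Fin n) ℝ :=
  ∑ s ∈ (Finset.univ : Finset (Fin n)).powersetCard k, ∏ i ∈ s, rowPoly A i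

/-- The mixed partial derivative `∂ⁿ/∂x₁⋯∂xₙ` of `p`, evaluated at `0`. -/
noncomputable def mixedDerivAtZero {n : ℕ} (p : MvPolynomial (Fin n) ℝ) : ℝ :=
  MvPolynomial.eval 0
    ((Finset.univ : Finset (Fin n)).toList.foldr (fun i q => MvPolynomial.pderiv i q) p)

/-!
The mixed derivative at `0` of a polynomial in `x₁, …, xₙ` is its coefficient of `x₁ ⋯ xₙ`.
Expanding `∏_{i ∈ S} (Ax)_i` picks one variable `x_{g i}` for each row `i ∈ S`; the monomial
`∏ x_{g i}` can be completed to `x₁ ⋯ xₙ` by `(x₁ + ⋯ + xₙ)^{n-k}` only if `g` is injective, and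
then in `(n-k)!` ways, one for each ordering of the remaining `n - k` variables. Finally, a row set
`S` of size `k` together with an injective `g : S → [n]` is the same as the graph of `g`, a set of
`k` positions of `A` in distinct rows and columns.
-/

namespace MvPolynomial

variable {σ R : Type*} [CommSemiring R]

noncomputable def sqfreeExponent (u : Finset σ) : σ →₀ ℕ := ∑ i ∈ u, Finsupp.single i 1

theorem sqfreeExponent_apply [DecidableEq σ] (u : Finset σ) (j : σ) :
    sqfreeExponent u j = if j ∈ u then 1 else 0 := by
  simp [sqfreeExponent, Finsupp.finsetSum_apply, Finsupp.single_apply]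

theorem support_sqfreeExponent [DecidableEq σ] (u : Finset σ) :
    (sqfreeExponent u).support = u := by
  ext j
  simp [sqfreeExponent_apply]

theorem sqfreeExponent_singleton (j : σ) : sqfreeExponent {j} = Finsupp.single j 1 :=
  Finset.sum_singleton _ _

theorem sqfreeExponent_image [DecidableEq σ] {ι : Type*} {s : Finset ι} {g : ι → σ}
    (hg : Set.InjOn g s) : sqfreeExponent (s.image g) = ∑ x ∈ s, Finsupp.single (g x) 1 :=
  Finset.sum_image hg

theorem sqfreeExponent_add_sdiff [DecidableEq σ] {u v : Finset σ} (h : v ⊆ u) :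
    sqfreeExponent v + sqfreeExponent (u \ v) = sqfreeExponent u := by
  rw [sqfreeExponent, sqfreeExponent, ← Finset.sum_union Finset.disjoint_sdiff,
    Finset.union_sdiff_of_subset h, sqfreeExponent]

theorem sqfreeExponent_le_of_subset [DecidableEq σ] {u v : Finset σ} (h : v ⊆ u) :
    sqfreeExponent v ≤ sqfreeExponent u :=
  sqfreeExponent_add_sdiff h ▸ le_self_add

theorem sqfreeExponent_sub_of_subset [DecidableEq σ] {u v : Finset σ} (h : v ⊆ u) :
    sqfreeExponent u - sqfreeExponent v = sqfreeExponent (u \ v) := by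
  rw [← sqfreeExponent_add_sdiff h, add_tsub_cancel_left]

theorem coeff_foldr_pderiv {l : List σ} (hl : l.Nodup) {m : σ →₀ ℕ} (hm : ∀ i ∈ l, m i = 0)
    (p : MvPolynomial σ R) :
    coeff m (l.foldr (fun i q => pderiv i q) p)
      = coeff (m + (l.map fun i => Finsupp.single i 1).sum) p := by
  induction l generalizing m with
  | nil => simp
  | cons a l ih =>
    obtain ⟨hal, hl⟩ := List.nodup_cons.mp hl
    have hm' : ∀ i ∈ l, (m + Finsupp.single a 1 : σ →₀ ℕ) i = 0 := fun i hi => by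
      rw [Finsupp.add_apply, hm i (List.mem_cons_of_mem a hi), zero_add,
        Finsupp.single_eq_of_ne (by rintro rfl; exact hal hi)]
    rw [List.foldr_cons, coeff_pderiv, hm a List.mem_cons_self, ih hl hm', List.map_cons,
      List.sum_cons, add_assoc]
    simp

theorem coeff_sqfreeExponent_mul_X [DecidableEq σ] (u : Finset σ) (j : σ)
    (q : MvPolynomial σ R) :
    coeff (sqfreeExponent u) (q * X j)
      = if j ∈ u then coeff (sqfreeExponent (u.erase j)) q else 0 := by
  rw [coeff_mul_X', support_sqfreeExponent]
  split_ifs with h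
  · rw [← sqfreeExponent_singleton,
      sqfreeExponent_sub_of_subset (Finset.singleton_subset_iff.2 h),
      Finset.sdiff_singleton_eq_erase]
  · rfl

theorem coeff_sqfreeExponent_sum_X_pow_card [Fintype σ] [DecidableEq σ] (u : Finset σ) :
    coeff (sqfreeExponent u) ((∑ i, X i : MvPolynomial σ R) ^ u.card) = u.card.factorial := by
  induction hu : u.card generalizing u with
  | zero =>
    rw [Finset.card_eq_zero.mp hu, sqfreeExponent, Finset.sum_empty, pow_zero, coeff_zero_one]
    simp
  | succ m ih =>
    have hterm (j : σ) : coeff (sqfreeExponent u) ((∑ i, X i : MvPolynomial σ R) ^ m * X j)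
        = if j ∈ u then (m.factorial : R) else 0 := by
      rw [coeff_sqfreeExponent_mul_X]
      split_ifs with h
      · rw [← ih _ (by rw [Finset.card_erase_of_mem h, hu, Nat.add_sub_cancel])]
      · rfl
    rw [pow_succ, Finset.mul_sum, coeff_sum, Finset.sum_congr rfl fun j _ => hterm j,
      Finset.sum_ite_mem, Finset.univ_inter, Finset.sum_const, hu, nsmul_eq_mul,
      Nat.factorial_succ, Nat.cast_mul]

theorem prod_X_eq_monomial {ι : Type*} (s : Finset ι) (g : ι → σ) :
    ∏ x ∈ s, (X (g x) : MvPolynomial σ R) = monomial (∑ x ∈ s, Finsupp.single (g x) 1) 1 :=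
  (monomial_sum_one s _).symm

theorem sum_single_le_sqfreeExponent_univ_iff [Fintype σ] [DecidableEq σ] {ι : Type*}
    [Fintype ι] {g : ι → σ} :
    ∑ x, Finsupp.single (g x) 1 ≤ sqfreeExponent (Finset.univ : Finset σ) ↔
      Function.Injective g := by
  classical
  refine ⟨fun hle x y hxy => ?_, fun hg => ?_⟩
  · by_contra hne
    have htwo : 2 ≤ (∑ z, Finsupp.single (g z) 1 : σ →₀ ℕ) (g x) := by
      rw [Finsupp.finsetSum_apply]
      calc 2 = ∑ z ∈ {x, y}, (Finsupp.single (g z) 1 : σ →₀ ℕ) (g x) := by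
            simp [Finset.sum_pair hne, hxy]
        _ ≤ _ := Finset.sum_le_sum_of_subset (Finset.subset_univ _)
    have hone := hle (g x)
    rw [sqfreeExponent_apply, if_pos (Finset.mem_univ _)] at hone
    omega
  · rw [← sqfreeExponent_image hg.injOn]
    exact sqfreeExponent_le_of_subset (Finset.subset_univ _)

theorem coeff_sqfreeExponent_univ_mul_prod_X [Fintype σ] [DecidableEq σ] {ι : Type*}
    [Fintype ι] (g : ι → σ) (q : MvPolynomial σ R) :
    coeff (sqfreeExponent Finset.univ) (q * ∏ x, X (g x))
      = if Function.Injective g then coeff (sqfreeExponent (Finset.univ.image g)ᶜ) q else 0 := by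
  rw [prod_X_eq_monomial, coeff_mul_monomial', mul_one]
  simp only [sum_single_le_sqfreeExponent_univ_iff]
  split_ifs with hg
  · rw [← sqfreeExponent_image hg.injOn, sqfreeExponent_sub_of_subset (Finset.subset_univ _),
      Finset.compl_eq_univ_sdiff]
  · rfl

end MvPolynomial

namespace Finset

variable {α β : Type*} [DecidableEq α] [DecidableEq β] {s : Finset α}

def partialGraph (g : s → β) : Finset (α × β) :=
  (univ : Finset s).image fun x : s => (↑x, g x)

theorem mk_mem_partialGraph {g : s → β} {a : α} {b : β} :
    (a, b) ∈ partialGraph g ↔ ∃ h : a ∈ s, g ⟨a, h⟩ = b := by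
  simp [partialGraph]

theorem partialGraph_injective :
    Function.Injective (partialGraph : (s → β) → Finset (α × β)) := by
  intro g₁ g₂ h
  funext x
  have hx : (↑x, g₁ x) ∈ partialGraph g₂ := by
    rw [← h]; exact mk_mem_partialGraph.mpr ⟨x.2, rfl⟩
  obtain ⟨_, hgx⟩ := mk_mem_partialGraph.mp hx
  exact hgx.symm

theorem image_fst_partialGraph (g : s → β) : (partialGraph g).image Prod.fst = s := by
  simp [partialGraph, image_image, Function.comp_def, attach_image_val]

theorem injOn_fst_partialGraph (g : s → β) :
    Set.InjOn Prod.fst (partialGraph g : Set (α × β)) := by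
  rintro ⟨a, b⟩ hp ⟨a', b'⟩ hq (rfl : a = a')
  obtain ⟨ha, rfl⟩ := mk_mem_partialGraph.mp hp
  obtain ⟨-, rfl⟩ := mk_mem_partialGraph.mp hq
  rfl

theorem injOn_snd_partialGraph_iff {g : s → β} :
    Set.InjOn Prod.snd (partialGraph g : Set (α × β)) ↔ Function.Injective g := by
  refine ⟨fun h x y hxy => Subtype.ext ?_, fun hg => ?_⟩
  · exact congrArg Prod.fst (h (mk_mem_partialGraph.mpr ⟨x.2, rfl⟩)
      (mk_mem_partialGraph.mpr ⟨y.2, rfl⟩) hxy)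
  · rintro ⟨a, b⟩ hp ⟨a', b'⟩ hq (rfl : b = b')
    obtain ⟨ha, rfl⟩ := mk_mem_partialGraph.mp hp
    obtain ⟨_, hb⟩ := mk_mem_partialGraph.mp hq
    cases congrArg Subtype.val (hg hb)
    rfl

theorem card_partialGraph (g : s → β) : (partialGraph g).card = s.card := by
  rw [← card_image_of_injOn (injOn_fst_partialGraph g), image_fst_partialGraph]

theorem exists_partialGraph_eq {t : Finset (α × β)}
    (ht : Set.InjOn Prod.fst (t : Set (α × β))) :
    ∃ g : t.image Prod.fst → β, partialGraph g = t := by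
  have hex (x : t.image Prod.fst) : ∃ b, (↑x, b) ∈ t := by
    obtain ⟨p, hp, hpx⟩ := mem_image.mp x.2
    exact ⟨p.2, hpx ▸ hp⟩
  choose g hg using hex
  refine ⟨g, ext fun ⟨a, b⟩ => ⟨fun hab => ?_, fun hab => ?_⟩⟩
  · obtain ⟨ha, rfl⟩ := mk_mem_partialGraph.mp hab
    exact hg ⟨a, ha⟩
  · have ha : a ∈ t.image Prod.fst := mem_image_of_mem Prod.fst hab
    exact mk_mem_partialGraph.mpr ⟨ha, congrArg Prod.snd (ht (hg ⟨a, ha⟩) hab rfl)⟩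

end Finset

section Matrix

variable {n : ℕ}

theorem mixedDerivAtZero_eq_coeff (p : MvPolynomial (Fin n) ℝ) :
    mixedDerivAtZero p = coeff (sqfreeExponent Finset.univ) p := by
  rw [mixedDerivAtZero, eval_zero, constantCoeff_eq,
    coeff_foldr_pderiv (Finset.nodup_toList _) (fun _ _ => rfl), zero_add, sqfreeExponent,
    Finset.sum_map_toList]

theorem prod_rowPoly_eq_sum (A : Matrix (Fin n) (Fin n) ℝ) (s : Finset (Fin n)) :
    ∏ i ∈ s, rowPoly A i = ∑ g : s → Fin n, C (∏ x : s, A x (g x)) * ∏ x, X (g x) := by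
  rw [← Finset.prod_coe_sort]
  simp only [rowPoly]
  rw [Fintype.prod_sum]
  refine Fintype.sum_congr _ _ fun g => ?_
  rw [Finset.prod_mul_distrib, map_prod]

theorem coeff_sqfreeExponent_univ_pow_mul_prod_rowPoly (A : Matrix (Fin n) (Fin n) ℝ)
    (s : Finset (Fin n)) :
    coeff (sqfreeExponent Finset.univ) ((∑ i, X i) ^ (n - s.card) * ∏ i ∈ s, rowPoly A i)
      = (n - s.card).factorial *
          ∑ g ∈ Finset.univ.filter (fun g : s → Fin n => Function.Injective g),
            ∏ x : s, A x (g x) := by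
  classical
  rw [prod_rowPoly_eq_sum, Finset.mul_sum, coeff_sum, Finset.mul_sum, Finset.sum_filter]
  refine Fintype.sum_congr _ _ fun g => ?_
  rw [mul_left_comm, coeff_C_mul, coeff_sqfreeExponent_univ_mul_prod_X]
  split_ifs with hg
  · have hcard : ((Finset.univ.image g)ᶜ).card = n - s.card := by
      rw [Finset.card_compl, Finset.card_image_of_injective _ hg, Finset.card_univ,
        Fintype.card_fin, Fintype.card_coe]
    rw [← hcard, coeff_sqfreeExponent_sum_X_pow_card, mul_comm]
  · rw [mul_zero]

theorem sum_sum_injective_prod_eq_permk (A : Matrix (Fin n) (Fin n) ℝ) (k : ℕ) :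
    ∑ s ∈ (Finset.univ : Finset (Fin n)).powersetCard k,
      ∑ g ∈ Finset.univ.filter (fun g : s → Fin n => Function.Injective g), ∏ x : s, A x (g x)
      = permk A k := by
  rw [permk, ← Finset.sum_fiberwise_of_maps_to (t := Finset.univ.powersetCard k)
    (g := fun p : Finset (Fin n × Fin n) => p.image Prod.fst) ?maps]
  case maps =>
    intro t ht
    obtain ⟨hcard, hfst, -⟩ := (Finset.mem_filter.mp ht).2
    exact Finset.mem_powersetCard.mpr
      ⟨Finset.subset_univ _, by rw [Finset.card_image_of_injOn hfst, hcard]⟩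
  refine Finset.sum_congr rfl fun s hs => ?_
  refine Finset.sum_bij (fun g _ => Finset.partialGraph g) (fun g hg => ?_)
    (fun g₁ _ g₂ _ h => Finset.partialGraph_injective h) (fun t ht => ?_) (fun g _ => ?_)
  · simp only [Finset.mem_filter, Finset.mem_univ, true_and] at hg ⊢
    exact ⟨⟨by rw [Finset.card_partialGraph, (Finset.mem_powersetCard.mp hs).2],
      Finset.injOn_fst_partialGraph g, Finset.injOn_snd_partialGraph_iff.mpr hg⟩,
      Finset.image_fst_partialGraph g⟩
  · simp only [Finset.mem_filter, Finset.mem_univ, true_and] at ht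
    obtain ⟨⟨-, hfst, hsnd⟩, rfl⟩ := ht
    obtain ⟨g, hg⟩ := Finset.exists_partialGraph_eq hfst
    refine ⟨g, ?_, hg⟩
    rw [← hg, Finset.injOn_snd_partialGraph_iff] at hsnd
    simpa using hsnd
  · rw [Finset.partialGraph, Finset.prod_image fun x _ y _ h => Subtype.ext (congrArg Prod.fst h)]

end Matrix

theorem mixedDeriv_eq_factorial_mul_permk_general (n k : ℕ)
    (A : Matrix (Fin n) (Fin n) ℝ) :
    mixedDerivAtZero ((∑ i, MvPolynomial.X i) ^ (n - k) * pkPoly A k)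
      = (Nat.factorial (n - k) : ℝ) * permk A k := by
  rw [mixedDerivAtZero_eq_coeff, pkPoly, Finset.mul_sum, coeff_sum,
    ← sum_sum_injective_prod_eq_permk, Finset.mul_sum]
  refine Finset.sum_congr rfl fun s hs => ?_
  rw [← (Finset.mem_powersetCard.mp hs).2, coeff_sqfreeExponent_univ_pow_mul_prod_rowPoly]

/-- For `A ∈ ℝ₊ⁿˣⁿ` and `1 ≤ k ≤ n`, the mixed partial derivative
`∂ⁿ/∂x₁⋯∂xₙ` of `(x₁+⋯+xₙ)^{n-k} · p_{k,A}` at `0` equals `(n-k)! · perm_k A`. -/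
theorem mixedDeriv_eq_factorial_mul_permk (n k : ℕ) (hk : 1 ≤ k) (hkn : k ≤ n)
    (A : Matrix (Fin n) (Fin n) ℝ) (hnn : ∀ i j, 0 ≤ A i j) :
    mixedDerivAtZero ((∑ i, MvPolynomial.X i) ^ (n - k) * pkPoly A k)
      = (Nat.factorial (n - k) : ℝ) * permk A k :=
  mixedDeriv_eq_factorial_mul_permk_general n k A
end
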